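/- arXiv:2102.11507 — 9 statements merged into one kernel-verified Lean document; each statement's English description precedes it below -/
import Mathlib

section
/- Let n ≥ 2 and let f : (Fin n → ℂ) → ℂ be holomorphic on the complement of the origin, i.e. DifferentiableOn ℂ f {0}ᶜ. Then there exists an entire function F : (Fin n → ℂ) → ℂ (Differentiable ℂ F) such that F x = f x for every x ≠ 0. -/
/-!
Integrate `f` over the unit circle in one coordinate `i`:
`F x = (2πi)⁻¹ ∮_{|z|=1} f(x with x i := z) / (z - x i) dz`.
The integrand only samples `f` on `|y i| = 1`, away from the origin, so differentiating under the
integral sign (the derivative being controlled by Cauchy estimates) shows that `F` is holomorphic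
on `|x i| < 1`. If another coordinate `x j` is nonzero, the whole disc `z ↦ (x with x i := z)`,
`|z| ≤ 1`, misses the origin and the one-variable Cauchy formula gives `F x = f x`. These points
are dense, so `F = f` near `0` off the origin and `F 0` is the missing value.
-/

open Complex Real Metric Set Function MeasureTheory Filter Topology

section CauchyEstimate

variable {E F : Type*} [NormedAddCommGroup E] [NormedSpace ℂ E] [NormedAddCommGroup F]
  [NormedSpace ℂ F]

theorem norm_fderiv_le_of_forall_mem_sphere_norm_le [Nontrivial E] {f : E → F} {c : E}
    {R C : ℝ} (hR : 0 < R) (hd : DiffContOnCl ℂ f (ball c R))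
    (hC : ∀ z ∈ sphere c R, ‖f z‖ ≤ C) :
    ‖fderiv ℂ f c‖ ≤ C / R := by
  obtain ⟨z, hz⟩ : (sphere c R).Nonempty := NormedSpace.sphere_nonempty.2 hR.le
  have hC0 : 0 ≤ C := (norm_nonneg _).trans (hC z hz)
  refine ContinuousLinearMap.opNorm_le_bound _ (by positivity) fun v => ?_
  rcases eq_or_ne v 0 with rfl | hv
  · simp
  have hv : 0 < ‖v‖ := norm_pos_iff.2 hv
  have hline : HasDerivAt (fun t : ℂ => c + t • v) v 0 := by
    simpa using ((hasDerivAt_id (0 : ℂ)).smul_const v).const_add c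
  have hmaps : MapsTo (fun t : ℂ => c + t • v) (ball 0 (R / ‖v‖)) (ball c R) := fun t ht => by
    rw [mem_ball_zero_iff, lt_div_iff₀ hv] at ht
    simpa [norm_smul] using ht
  have hslice : DiffContOnCl ℂ (f ∘ fun t : ℂ => c + t • v) (ball 0 (R / ‖v‖)) :=
    hd.comp (by fun_prop : Differentiable ℂ fun t : ℂ => c + t • v).diffContOnCl hmaps
  have hderiv : deriv (f ∘ fun t : ℂ => c + t • v) 0 = fderiv ℂ f c v := by
    have hfc : HasFDerivAt f (fderiv ℂ f c) (c + (0 : ℂ) • v) := by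
      simpa using (hd.differentiableAt isOpen_ball (mem_ball_self hR)).hasFDerivAt
    exact (hfc.comp_hasDerivAt 0 hline).deriv
  calc ‖fderiv ℂ f c v‖ ≤ C / (R / ‖v‖) := hderiv ▸
        Complex.norm_deriv_le_of_forall_mem_sphere_norm_le (by positivity) hslice fun t ht => by
          refine hC _ ?_
          rw [mem_sphere_zero_iff_norm] at ht
          simp [norm_smul, ht, hv.ne']
    _ = C / R * ‖v‖ := by field_simp

end CauchyEstimate

section CircleIntegral

variable {E H : Type*} [NormedAddCommGroup E] [NormedSpace ℂ E] [NormedAddCommGroup H]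
  [NormedSpace ℂ H]

theorem hasFDerivAt_circleIntegral_of_dominated_of_fderiv_le {g : H → ℂ → E}
    {g' : H → ℂ → H →L[ℂ] E} {x₀ : H} {s : Set H} {c : ℂ} {R C : ℝ} (hs : s ∈ 𝓝 x₀)
    (hg : ∀ x ∈ s, ContinuousOn (g x) (sphere c |R|))
    (hg'_meas : AEStronglyMeasurable fun θ => g' x₀ (circleMap c R θ))
    (hg'_le : ∀ x ∈ s, ∀ z ∈ sphere c |R|, ‖g' x z‖ ≤ C)
    (hg' : ∀ x ∈ s, ∀ z ∈ sphere c |R|, HasFDerivAt (g · z) (g' x z) x) :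
    HasFDerivAt (fun x => ∮ z in C(c, R), g x z) (∮ z in C(c, R), g' x₀ z) x₀ := by
  have hcont : ∀ x ∈ s, Continuous fun θ => deriv (circleMap c R) θ • g x (circleMap c R θ) :=
    fun x hx => by
      simp only [deriv_circleMap]
      exact (by fun_prop : Continuous fun θ => circleMap 0 R θ * I).smul
        ((hg x hx).comp_continuous (continuous_circleMap c R) (circleMap_mem_sphere' c R))
  refine intervalIntegral.hasFDerivAt_integral_of_dominated_of_fderiv_le
    (F := fun x θ => deriv (circleMap c R) θ • g x (circleMap c R θ))
    (F' := fun x θ => deriv (circleMap c R) θ • g' x (circleMap c R θ)) (bound := fun _ => |R| * C)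
    hs ?_ ((hcont x₀ (mem_of_mem_nhds hs)).intervalIntegrable _ _) ?_ ?_
    intervalIntegrable_const ?_
  · filter_upwards [hs] with x hx using (hcont x hx).aestronglyMeasurable
  · simp only [deriv_circleMap]
    exact ((by fun_prop : Continuous fun θ => circleMap 0 R θ * I).aestronglyMeasurable.smul
      hg'_meas).restrict
  · refine ae_of_all _ fun θ _ x hx => ?_
    rw [norm_smul, deriv_circleMap, norm_mul, norm_circleMap_zero, norm_I, mul_one]
    exact mul_le_mul_of_nonneg_left (hg'_le x hx _ (circleMap_mem_sphere' c R θ)) (abs_nonneg R)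
  · exact ae_of_all _ fun θ _ x hx =>
      (hg' x hx _ (circleMap_mem_sphere' c R θ)).const_smul (deriv (circleMap c R) θ)

end CircleIntegral

section SliceCauchyIntegral

variable {ι : Type*} [DecidableEq ι]

theorem hasFDerivAt_update_left [Fintype ι] {𝕜 : Type*} [NontriviallyNormedField 𝕜]
    {E : ι → Type*} [∀ j, NormedAddCommGroup (E j)] [∀ j, NormedSpace 𝕜 (E j)] (i : ι) (z : E i)
    (x : ∀ j, E j) :
    HasFDerivAt (fun x : ∀ j, E j => update x i z)
      (ContinuousLinearMap.pi (update (ContinuousLinearMap.proj (R := 𝕜)) i 0)) x := by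
  have hsplit : (fun x : ∀ j, E j => update x i z) = fun x =>
      ContinuousLinearMap.pi (update (ContinuousLinearMap.proj (R := 𝕜)) i 0) x +
        Pi.single i z := by
    funext x j
    rcases eq_or_ne j i with rfl | h
    · simp
    · simp [h]
  rw [hsplit]
  exact (ContinuousLinearMap.hasFDerivAt _).add_const _

noncomputable def sliceCauchyIntegrand (i : ι) (f : (ι → ℂ) → ℂ) (x : ι → ℂ) (z : ℂ) : ℂ :=
  (z - x i)⁻¹ * f (update x i z)

noncomputable def sliceCauchyIntegral (i : ι) (f : (ι → ℂ) → ℂ) (x : ι → ℂ) : ℂ :=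
  (2 * π * I)⁻¹ • ∮ z in C(0, 1), sliceCauchyIntegrand i f x z

variable {i : ι} {f : (ι → ℂ) → ℂ}

theorem continuousOn_sliceCauchyIntegrand
    (hf : ∀ y : ι → ℂ, ‖y i‖ = 1 → DifferentiableAt ℂ f y) :
    ContinuousOn (fun p : (ι → ℂ) × ℂ => sliceCauchyIntegrand i f p.1 p.2)
      ({x | ‖x i‖ < 1} ×ˢ sphere 0 1) := by
  rintro ⟨x, z⟩ ⟨hx, hz⟩
  have hne : z - x i ≠ 0 := sub_ne_zero.2 fun h => hx.ne (by simpa [h] using hz)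
  have hupd : Continuous fun p : (ι → ℂ) × ℂ => update p.1 i p.2 :=
    continuous_fst.update i continuous_snd
  exact (((continuous_snd.sub ((continuous_apply i).comp continuous_fst)).continuousAt.inv₀
    hne).mul ((hf _ (by simpa using hz)).continuousAt.comp hupd.continuousAt)).continuousWithinAt

variable [Fintype ι]

theorem sliceCauchyIntegral_eq {x : ι → ℂ} (hx : ‖x i‖ < 1)
    (hf : ∀ z ∈ closedBall (0 : ℂ) 1, DifferentiableAt ℂ f (update x i z)) :
    sliceCauchyIntegral i f x = f x := by
  have hd : DifferentiableOn ℂ (fun z => f (update x i z)) (closedBall 0 1) := fun z hz =>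
    ((hf z hz).comp z (hasFDerivAt_update x z).differentiableAt).differentiableWithinAt
  have hx : x i ∈ ball (0 : ℂ) 1 := mem_ball_zero_iff.2 hx
  have hcauchy := hd.circleIntegral_sub_inv_smul hx
  simp only [smul_eq_mul, update_eq_self] at hcauchy
  simp only [sliceCauchyIntegral, sliceCauchyIntegrand, hcauchy, smul_eq_mul, ← mul_assoc,
    inv_mul_cancel₀ two_pi_I_ne_zero, one_mul]

theorem hasFDerivAt_sliceCauchyIntegrand {x : ι → ℂ} {z : ℂ} (hz : z ≠ x i)
    (hf : DifferentiableAt ℂ f (update x i z)) :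
    HasFDerivAt (sliceCauchyIntegrand i f · z)
      ((z - x i)⁻¹ • (fderiv ℂ f (update x i z)).comp
          (ContinuousLinearMap.pi (update (ContinuousLinearMap.proj (R := ℂ)) i 0)) +
        f (update x i z) • ((z - x i) ^ 2)⁻¹ • ContinuousLinearMap.proj (R := ℂ) i) x := by
  have hkernel : HasFDerivAt (fun x : ι → ℂ => (z - x i)⁻¹)
      (((z - x i) ^ 2)⁻¹ • ContinuousLinearMap.proj (R := ℂ) i) x := by
    have h : HasDerivAt (fun w : ℂ => (z - w)⁻¹) ((z - x i) ^ 2)⁻¹ (x i) := by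
      simpa using ((hasDerivAt_id' (x i)).const_sub z).fun_inv (sub_ne_zero.2 hz)
    exact h.comp_hasFDerivAt (h₂ := fun w : ℂ => (z - w)⁻¹) x (hasFDerivAt_apply i x)
  exact hkernel.mul (hf.hasFDerivAt.comp x (hasFDerivAt_update_left i z x))

theorem differentiableAt_sliceCauchyIntegrand
    (hf : ∀ y : ι → ℂ, ‖y i‖ = 1 → DifferentiableAt ℂ f y) {x : ι → ℂ} {z : ℂ}
    (hx : ‖x i‖ < 1) (hz : z ∈ sphere (0 : ℂ) 1) :
    DifferentiableAt ℂ (sliceCauchyIntegrand i f · z) x :=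
  (hasFDerivAt_sliceCauchyIntegrand (fun h => hx.ne (by simpa [h] using hz))
    (hf _ (by simpa using hz))).differentiableAt

theorem exists_bound_fderiv_sliceCauchyIntegrand
    (hf : ∀ y : ι → ℂ, ‖y i‖ = 1 → DifferentiableAt ℂ f y) {x₀ : ι → ℂ} (hx₀ : ‖x₀ i‖ < 1) :
    ∃ C, ∀ᶠ x in 𝓝 x₀, ∀ z ∈ sphere (0 : ℂ) 1,
      ‖fderiv ℂ (sliceCauchyIntegrand i f · z) x‖ ≤ C := by
  have : Nonempty ι := ⟨i⟩
  set r := (1 - ‖x₀ i‖) / 3 with hr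
  have hr0 : 0 < r := div_pos (sub_pos.2 hx₀) three_pos
  have hball : closedBall x₀ (2 * r) ⊆ {x | ‖x i‖ < 1} := fun y hy => by
    have h1 : ‖y i - x₀ i‖ ≤ 2 * r :=
      (norm_le_pi_norm (y - x₀) i).trans (mem_closedBall_iff_norm.1 hy)
    have h2 := norm_le_insert' (y i) (x₀ i)
    show ‖y i‖ < 1
    linarith
  obtain ⟨M, hM⟩ := ((isCompact_closedBall x₀ (2 * r)).prod
    (isCompact_sphere 0 1)).exists_bound_of_continuousOn
      ((continuousOn_sliceCauchyIntegrand hf).mono (prod_mono hball subset_rfl))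
  refine ⟨M / r, eventually_of_mem (ball_mem_nhds x₀ hr0) fun x hx z hz => ?_⟩
  have hsub : closedBall x r ⊆ closedBall x₀ (2 * r) :=
    closedBall_subset_closedBall' (by linarith [mem_ball.1 hx])
  refine norm_fderiv_le_of_forall_mem_sphere_norm_le hr0 ?_
    fun y hy => hM (y, z) ⟨hsub (sphere_subset_closedBall hy), hz⟩
  refine DifferentiableOn.diffContOnCl_ball (fun y hy => ?_) subset_rfl
  exact (differentiableAt_sliceCauchyIntegrand hf (hball (hsub hy)) hz).differentiableWithinAt

theorem aestronglyMeasurable_fderiv_sliceCauchyIntegrand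
    (hf : ∀ y : ι → ℂ, ‖y i‖ = 1 → DifferentiableAt ℂ f y) {x : ι → ℂ} (hx : ‖x i‖ < 1) :
    AEStronglyMeasurable fun θ => fderiv ℂ (sliceCauchyIntegrand i f · (circleMap 0 1 θ)) x := by
  have hcm (θ : ℝ) : circleMap 0 1 θ ∈ sphere (0 : ℂ) 1 := by simp
  have hne (θ : ℝ) : circleMap 0 1 θ - x i ≠ 0 :=
    sub_ne_zero.2 fun h => hx.ne (by simpa [h] using hcm θ)
  have hupd : Continuous fun θ => update x i (circleMap 0 1 θ) :=
    continuous_const.update i (continuous_circleMap 0 1)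
  have hfupd : Continuous fun θ => f (update x i (circleMap 0 1 θ)) :=
    continuous_iff_continuousAt.2 fun θ =>
      (hf _ (by simp)).continuousAt.comp hupd.continuousAt
  have hkernel : Continuous fun θ => (circleMap 0 1 θ - x i)⁻¹ :=
    continuous_circleMap_inv (mem_ball_zero_iff.2 hx)
  have hkernel2 : Continuous fun θ => ((circleMap 0 1 θ - x i) ^ 2)⁻¹ :=
    (((continuous_circleMap 0 1).sub continuous_const).pow 2).inv₀ fun θ => pow_ne_zero 2 (hne θ)
  -- `fderiv ℂ f` is Borel measurable for every `f`; the chain rule exposes the dependence on `θ`.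
  have hfderiv : AEStronglyMeasurable fun θ => (fderiv ℂ f (update x i (circleMap 0 1 θ))).comp
      (ContinuousLinearMap.pi (update (ContinuousLinearMap.proj (R := ℂ)) i 0)) :=
    (continuous_id.clm_comp continuous_const).comp_aestronglyMeasurable
      ((measurable_fderiv ℂ f).comp hupd.measurable).aestronglyMeasurable
  have hformula : (fun θ => fderiv ℂ (sliceCauchyIntegrand i f · (circleMap 0 1 θ)) x) = fun θ =>
      (circleMap 0 1 θ - x i)⁻¹ • (fderiv ℂ f (update x i (circleMap 0 1 θ))).comp
          (ContinuousLinearMap.pi (update (ContinuousLinearMap.proj (R := ℂ)) i 0)) +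
        f (update x i (circleMap 0 1 θ)) • ((circleMap 0 1 θ - x i) ^ 2)⁻¹ •
          ContinuousLinearMap.proj (R := ℂ) i := by
    funext θ
    exact (hasFDerivAt_sliceCauchyIntegrand (sub_ne_zero.1 (hne θ))
      (hf _ (by simp))).fderiv
  rw [hformula]
  refine (hkernel.aestronglyMeasurable.smul hfderiv).add (Continuous.aestronglyMeasurable ?_)
  exact hfupd.smul (hkernel2.smul continuous_const)

theorem differentiableOn_sliceCauchyIntegral
    (hf : ∀ y : ι → ℂ, ‖y i‖ = 1 → DifferentiableAt ℂ f y) :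
    DifferentiableOn ℂ (sliceCauchyIntegral i f) {x | ‖x i‖ < 1} := by
  have hU : IsOpen {x : ι → ℂ | ‖x i‖ < 1} :=
    isOpen_lt (continuous_norm.comp (continuous_apply i)) continuous_const
  intro x₀ hx₀
  obtain ⟨C, hC⟩ := exists_bound_fderiv_sliceCauchyIntegrand hf hx₀
  have hcont : ∀ x : ι → ℂ, ‖x i‖ < 1 →
      ContinuousOn (sliceCauchyIntegrand i f x) (sphere 0 |1|) :=
    fun x hx => by
      rw [abs_one]
      have hmaps : MapsTo (fun z : ℂ => (x, z)) (sphere 0 1) ({x | ‖x i‖ < 1} ×ˢ sphere 0 1) :=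
        fun z hz => ⟨hx, hz⟩
      exact (continuousOn_sliceCauchyIntegrand hf).comp (f := fun z : ℂ => (x, z))
        (Continuous.prodMk_right x).continuousOn hmaps
  have hmain := hasFDerivAt_circleIntegral_of_dominated_of_fderiv_le (c := 0) (R := 1) (C := C)
    (g := sliceCauchyIntegrand i f) (g' := fun x z => fderiv ℂ (sliceCauchyIntegrand i f · z) x)
    (inter_mem (hU.mem_nhds hx₀) hC) (fun x hx => hcont x hx.1)
    (aestronglyMeasurable_fderiv_sliceCauchyIntegrand hf hx₀)
    (fun x hx z hz => hx.2 z (by simpa using hz))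
    (fun x hx z hz =>
      (differentiableAt_sliceCauchyIntegrand hf hx.1 (by simpa using hz)).hasFDerivAt)
  exact (hmain.differentiableAt.const_smul (2 * π * I : ℂ)⁻¹).differentiableWithinAt

theorem eqOn_sliceCauchyIntegral {j : ι} (hji : j ≠ i)
    (hf : DifferentiableOn ℂ f {0}ᶜ) :
    EqOn (sliceCauchyIntegral i f) f ({x | ‖x i‖ < 1} \ {0}) := by
  have hfi : ∀ y : ι → ℂ, ‖y i‖ = 1 → DifferentiableAt ℂ f y := fun y hy =>
    hf.differentiableAt (isOpen_compl_singleton.mem_nhds (by rintro rfl; simp at hy))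
  have hU : IsOpen ({x : ι → ℂ | ‖x i‖ < 1} \ {0}) :=
    (isOpen_lt (by fun_prop) continuous_const).sdiff isClosed_singleton
  have hdense : Dense {x : ι → ℂ | x j ≠ 0} :=
    (dense_compl_singleton (0 : ℂ)).preimage (isOpenMap_eval j)
  refine EqOn.of_subset_closure ?_ ((differentiableOn_sliceCauchyIntegral hfi).continuousOn.mono
    sdiff_subset) (hf.continuousOn.mono fun x hx => hx.2) inter_subset_left
    (hdense.open_subset_closure_inter hU)
  rintro x ⟨⟨hx, -⟩, hxj⟩
  refine sliceCauchyIntegral_eq hx fun z _ =>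
    hf.differentiableAt (isOpen_compl_singleton.mem_nhds fun h => hxj ?_)
  simpa [hji] using congrFun h j

end SliceCauchyIntegral

theorem differentiable_update_of_eqOn_compl_singleton {𝕜 E F : Type*} [NontriviallyNormedField 𝕜]
    [NormedAddCommGroup E] [NormedSpace 𝕜 E] [DecidableEq E] [NormedAddCommGroup F]
    [NormedSpace 𝕜 F] {f g : E → F} {c : E} {U : Set E} (hf : DifferentiableOn 𝕜 f {c}ᶜ)
    (hU : U ∈ 𝓝 c) (hg : DifferentiableOn 𝕜 g U) (hgf : EqOn g f (U \ {c})) :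
    Differentiable 𝕜 (update f c (g c)) := by
  intro x
  rcases eq_or_ne x c with rfl | hx
  · refine (hg.differentiableAt hU).congr_of_eventuallyEq ?_
    filter_upwards [hU] with y hy
    rcases eq_or_ne y x with rfl | hyx
    · simp
    · rw [update_of_ne hyx, hgf ⟨hy, hyx⟩]
  · have hx : {c}ᶜ ∈ 𝓝 x := isOpen_compl_singleton.mem_nhds hx
    refine (hf.differentiableAt hx).congr_of_eventuallyEq ?_
    filter_upwards [hx] with y hy using update_of_ne hy _ _

/-- Hartogs' extension theorem for a point: for `n ≥ 2`, every function holomorphic on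
`ℂⁿ ∖ {0}` extends to an entire function on `ℂⁿ`. -/
theorem hartogs_extension_point (n : ℕ) (hn : 2 ≤ n) (f : (Fin n → ℂ) → ℂ)
    (hf : DifferentiableOn ℂ f ({0}ᶜ : Set (Fin n → ℂ))) :
    ∃ F : (Fin n → ℂ) → ℂ, Differentiable ℂ F ∧ ∀ x : Fin n → ℂ, x ≠ 0 → F x = f x := by
  classical
  let i : Fin n := ⟨0, by omega⟩
  let j : Fin n := ⟨1, by omega⟩
  have hfi : ∀ y : Fin n → ℂ, ‖y i‖ = 1 → DifferentiableAt ℂ f y := fun y hy =>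
    hf.differentiableAt (isOpen_compl_singleton.mem_nhds (by rintro rfl; simp at hy))
  have hU : {x : Fin n → ℂ | ‖x i‖ < 1} ∈ 𝓝 0 :=
    (isOpen_lt (by fun_prop) continuous_const).mem_nhds (by simp)
  refine ⟨update f 0 (sliceCauchyIntegral i f 0), ?_, fun x hx => update_of_ne hx _ _⟩
  exact differentiable_update_of_eqOn_compl_singleton hf hU
    (differentiableOn_sliceCauchyIntegral hfi)
    (eqOn_sliceCauchyIntegral (j := j) (by simp [i, j]) hf)
end

section
/- Let n ≥ 2, let R = MvPolynomial (Fin n) ℂ and let K be its fraction field. Suppose g ∈ K is such that for every i : Fin n there exist p ∈ R and k ∈ ℕ with g * (algebraMap R K (X i))^k = algebraMap R K p. Then g lies in the image of R in K, i.e. g = algebraMap R K q for some polynomial q. -/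
/-!
Write `g = a / b` in lowest terms in the UFD `ℂ[z₁,…,zₙ]`. If `g * zᵢ ^ k` is a polynomial then
`b ∣ a * zᵢ ^ k`, hence `b ∣ zᵢ ^ k`. Since `z₁` and `z₂` are non-associated primes, `b` divides two
coprime polynomials and is therefore a unit.
-/

open MvPolynomial

theorem MvPolynomial.isRelPrime_X_X {σ R : Type*} [CommRing R] [IsCancelMulZero R]
    [Nontrivial R] {i j : σ} (hij : i ≠ j) : IsRelPrime (X i : MvPolynomial σ R) (X j) :=
  X_prime.irreducible.isRelPrime_iff_not_dvd.mpr (hij ∘ X_dvd_X.mp)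

namespace IsFractionRing

variable {A : Type*} [CommRing A] [IsDomain A] [UniqueFactorizationMonoid A]
  {K : Type*} [Field K] [Algebra A K] [IsFractionRing A K]

theorem den_dvd_of_isInteger_mul {x : K} {c : A}
    (h : IsLocalization.IsInteger A (x * algebraMap A K c)) : (den A x : A) ∣ c := by
  obtain ⟨p, hp⟩ := h
  have hx : x * algebraMap A K (den A x) = algebraMap A K (num A x) :=
    num_mul_den_eq_num_iff_eq.mpr rfl
  have hnum : num A x * c = den A x * p := by
    apply IsFractionRing.injective A K
    rw [map_mul, map_mul, hp, ← hx]
    ring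
  exact (num_den_reduced A x).symm.dvd_of_dvd_mul_left ⟨p, hnum⟩

theorem isInteger_of_isInteger_mul_pow {x y : A} (hxy : IsRelPrime x y) {g : K} {k l : ℕ}
    (hx : IsLocalization.IsInteger A (g * algebraMap A K x ^ k))
    (hy : IsLocalization.IsInteger A (g * algebraMap A K y ^ l)) :
    IsLocalization.IsInteger A g := by
  rw [← map_pow] at hx hy
  exact isInteger_of_isUnit_den <|
    hxy.pow (den_dvd_of_isInteger_mul hx) (den_dvd_of_isInteger_mul hy)

end IsFractionRing

/-- Algebraic Hartogs phenomenon: for `n ≥ 2`, an element of the fraction field of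
`R = ℂ[z₁,…,zₙ]` which lies in every localization `R[1/zᵢ]` is a polynomial. -/
theorem algebraic_hartogs (n : ℕ) (hn : 2 ≤ n)
    (g : FractionRing (MvPolynomial (Fin n) ℂ))
    (h : ∀ i : Fin n, ∃ (p : MvPolynomial (Fin n) ℂ) (k : ℕ),
      g * (algebraMap (MvPolynomial (Fin n) ℂ) (FractionRing (MvPolynomial (Fin n) ℂ))
            (X i)) ^ k
        = algebraMap (MvPolynomial (Fin n) ℂ) (FractionRing (MvPolynomial (Fin n) ℂ)) p) :
    ∃ q : MvPolynomial (Fin n) ℂ,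
      g = algebraMap (MvPolynomial (Fin n) ℂ) (FractionRing (MvPolynomial (Fin n) ℂ)) q := by
  have h01 : (⟨0, by omega⟩ : Fin n) ≠ ⟨1, by omega⟩ := by simp
  obtain ⟨p₀, k₀, h₀⟩ := h ⟨0, by omega⟩
  obtain ⟨p₁, k₁, h₁⟩ := h ⟨1, by omega⟩
  obtain ⟨q, hq⟩ := IsFractionRing.isInteger_of_isInteger_mul_pow (isRelPrime_X_X h01)
    ⟨p₀, h₀.symm⟩ ⟨p₁, h₁.symm⟩
  exact ⟨q, hq.symm⟩
end

section
/- Let n ≥ 3 and E = EuclideanSpace ℝ (Fin n). Consider the set V of vector fields X : E → E of the form X x = a + A x + c • x + (2 * ⟪x, b⟫) • x − (‖x‖^2) • b, where a, b ∈ E, c ∈ ℝ, and A : E →ₗ[ℝ] E satisfies ⟪A v, w⟫ = −⟪v, A w⟫ for all v, w. Then (1) V is an ℝ-submodule of E → E of finite rank (n+1)(n+2)/2, and (2) every X ∈ V is a conformal Killing field on all of E, i.e. there is λ : E → ℝ with ⟪(fderiv ℝ X x) v, w⟫ + ⟪v, (fderiv ℝ X x) w⟫ = λ x * ⟪v, w⟫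 for all x, v, w. -/
/-!
A field `moebiusField a b c A` is the sum of a translation `a`, an infinitesimal rotation `A`,
a dilation `c` and a special conformal part `x ↦ 2⟪x, b⟫ x - ‖x‖² b`. Its derivative at `x` is
`A + (c + 2⟪x, b⟫) • id` plus the skew map `v ↦ 2⟪v, b⟫ x - 2⟪x, v⟫ b`, so the symmetric part
of the derivative is a multiple of the identity.

Evaluating the field at `t • x` gives a polynomial `a + t L(x) + t² Q(x)` in `t`, so a vanishing
field has `a`, `L` and `Q` zero, and then `b = 0` (from `Q b = ‖b‖² b`), `c = 0` (as `⟪A x, x⟫ = 0`)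
and `A = 0`: the parametrisation by `(a, b, c, A)` is injective. A skew-adjoint map is determined
by its matrix entries above the diagonal, so the parameter space has dimension
`n + n + 1 + C(n, 2) = C(n + 2, 2)`.
-/

open scoped RealInnerProductSpace
open Module

theorem StarAlgEquiv.finrank_skewAdjoint_eq {R A B : Type*} [CommRing R] [StarRing R]
    [TrivialStar R] [Ring A] [StarRing A] [Algebra R A] [StarModule R A] [Ring B] [StarRing B]
    [Algebra R B] [StarModule R B] (e : A ≃⋆ₐ[R] B) :
    finrank R (skewAdjoint.submodule R A) = finrank R (skewAdjoint.submodule R B) := by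
  have hmap : (skewAdjoint.submodule R A).map (e.toAlgEquiv.toLinearEquiv : A →ₗ[R] B) =
      skewAdjoint.submodule R B := by
    ext M
    rw [Submodule.mem_map_equiv]
    change star (e.symm M) = -e.symm M ↔ star M = -M
    rw [← map_star, ← map_neg, EmbeddingLike.apply_eq_iff_eq]
  rw [← hmap, LinearEquiv.finrank_map_eq]

namespace Matrix

theorem mem_skewAdjoint_iff_transpose {K ι : Type*} [Ring K] [StarRing K] [TrivialStar K]
    {M : Matrix ι ι K} :
    M ∈ skewAdjoint (Matrix ι ι K) ↔ Mᵀ = -M := by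
  rw [skewAdjoint.mem_iff, star_eq_conjTranspose, conjTranspose_eq_transpose_of_trivial]

def strictUpperOf {K ι : Type*} [Zero K] [LinearOrder ι] (f : {p : ι × ι // p.1 < p.2} → K) :
    Matrix ι ι K :=
  of fun i j => if h : i < j then f ⟨(i, j), h⟩ else 0

variable {K : Type*} [Field K] [StarRing K] [TrivialStar K] [CharZero K]
  {ι : Type*} [Fintype ι] [LinearOrder ι]

def skewAdjointEquivStrictUpper :
    skewAdjoint.submodule K (Matrix ι ι K) ≃ₗ[K] ({p : ι × ι // p.1 < p.2} → K) where
  toFun M p := (M : Matrix ι ι K) p.1.1 p.1.2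
  map_add' _ _ := rfl
  map_smul' _ _ := rfl
  invFun f := ⟨strictUpperOf f - (strictUpperOf f)ᵀ, mem_skewAdjoint_iff_transpose.2 <| by
    rw [transpose_sub, transpose_transpose, neg_sub]⟩
  left_inv M := by
    have hM := mem_skewAdjoint_iff_transpose.1 M.2
    ext i j
    have hji : (M : Matrix ι ι K) j i = -(M : Matrix ι ι K) i j := by
      simpa using congrFun (congrFun hM i) j
    rcases lt_trichotomy i j with h | rfl | h
    · simp [strictUpperOf, h, h.not_gt]
    · simpa [strictUpperOf] using (self_eq_neg.1 hji).symm
    · simp [strictUpperOf, h, h.not_gt, hji]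
  right_inv f := by
    ext ⟨⟨i, j⟩, h⟩
    simp [strictUpperOf, h, h.not_gt]

theorem finrank_skewAdjoint :
    finrank K (skewAdjoint.submodule K (Matrix ι ι K)) = (Fintype.card ι).choose 2 := by
  classical
  rw [skewAdjointEquivStrictUpper.finrank_eq, finrank_fintype_fun_eq_card, Fintype.card_subtype,
    Fintype.card_product_filter_lt]

end Matrix

namespace LinearMap

variable {E : Type*} [NormedAddCommGroup E] [InnerProductSpace ℝ E] [FiniteDimensional ℝ E]

theorem mem_skewAdjoint_iff_inner {A : E →ₗ[ℝ] E} :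
    A ∈ skewAdjoint (E →ₗ[ℝ] E) ↔ ∀ v w, ⟪A v, w⟫ = -⟪v, A w⟫ := by
  rw [skewAdjoint.mem_iff, star_eq_adjoint, eq_comm, eq_adjoint_iff]
  simp [neg_eq_iff_eq_neg]

theorem inner_apply_self_eq_zero_of_mem_skewAdjoint {A : E →ₗ[ℝ] E}
    (hA : A ∈ skewAdjoint (E →ₗ[ℝ] E)) (x : E) : ⟪A x, x⟫ = 0 := by
  have := mem_skewAdjoint_iff_inner.1 hA x x
  rw [real_inner_comm x (A x)] at this ⊢
  linarith

theorem finrank_skewAdjoint :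
    finrank ℝ (skewAdjoint.submodule ℝ (E →ₗ[ℝ] E)) = (finrank ℝ E).choose 2 := by
  rw [(toMatrixOrthonormal (stdOrthonormalBasis ℝ E)).finrank_skewAdjoint_eq,
    Matrix.finrank_skewAdjoint, Fintype.card_fin]

end LinearMap

section MoebiusField

variable {E : Type*} [NormedAddCommGroup E] [InnerProductSpace ℝ E]

def moebiusField (a b : E) (c : ℝ) (A : E →ₗ[ℝ] E) (x : E) : E :=
  a + A x + c • x + (2 * ⟪x, b⟫) • x - ‖x‖ ^ 2 • b

theorem moebiusField_smul (a b : E) (c : ℝ) (A : E →ₗ[ℝ] E) (t : ℝ) (x : E) :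
    moebiusField a b c A (t • x) =
      a + t • (A x + c • x) + t ^ 2 • ((2 * ⟪x, b⟫) • x - ‖x‖ ^ 2 • b) := by
  simp only [moebiusField, map_smul, inner_smul_left, norm_smul, mul_pow, Real.norm_eq_abs,
    sq_abs, RCLike.conj_to_real]
  module

variable [FiniteDimensional ℝ E]

theorem fderiv_moebiusField_apply (a b : E) (c : ℝ) (A : E →ₗ[ℝ] E) (x v : E) :
    fderiv ℝ (moebiusField a b c A) x v =
      A v + c • v + (2 * ⟪x, b⟫) • v + (2 * ⟪v, b⟫) • x - (2 * ⟪x, v⟫) • b := by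
  have hA := (LinearMap.toContinuousLinearMap (𝕜 := ℝ) A).hasFDerivAt (x := x)
  have hc := (hasFDerivAt_id (𝕜 := ℝ) x).const_smul c
  have hb := ((hasFDerivAt_id (𝕜 := ℝ) x).inner ℝ (hasFDerivAt_const b x)).const_mul 2
  have hnorm := (hasStrictFDerivAt_norm_sq x).hasFDerivAt.smul_const b
  have hX : HasFDerivAt (moebiusField a b c A) _ x :=
    ((((hasFDerivAt_const a x).add hA).add hc).add (hb.smul (hasFDerivAt_id x))).sub hnorm
  rw [hX.fderiv]
  simp [add_assoc]

theorem inner_fderiv_moebiusField_add {a b : E} {c : ℝ} {A : E →ₗ[ℝ] E}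
    (hA : A ∈ skewAdjoint (E →ₗ[ℝ] E)) (x v w : E) :
    ⟪fderiv ℝ (moebiusField a b c A) x v, w⟫ + ⟪v, fderiv ℝ (moebiusField a b c A) x w⟫ =
      (2 * c + 4 * ⟪x, b⟫) * ⟪v, w⟫ := by
  simp only [fderiv_moebiusField_apply, inner_add_left, inner_add_right, inner_sub_left,
    inner_sub_right, real_inner_smul_left, real_inner_smul_right,
    LinearMap.mem_skewAdjoint_iff_inner.1 hA v w]
  rw [real_inner_comm x v, real_inner_comm b w]
  ring

def moebiusFieldMap : E × E × ℝ × skewAdjoint.submodule ℝ (E →ₗ[ℝ] E) →ₗ[ℝ] (E → E) where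
  toFun p := moebiusField p.1 p.2.1 p.2.2.1 p.2.2.2
  map_add' p q := by
    funext x
    simp only [moebiusField, Prod.fst_add, Prod.snd_add, Submodule.coe_add, LinearMap.add_apply,
      inner_add_right, Pi.add_apply]
    module
  map_smul' r p := by
    funext x
    simp only [moebiusField, Prod.smul_fst, Prod.smul_snd, Submodule.coe_smul,
      LinearMap.smul_apply, inner_smul_right, RingHom.id_apply, Pi.smul_apply]
    module

theorem moebiusFieldMap_injective [Nontrivial E] :
    Function.Injective (moebiusFieldMap (E := E)) := by
  rw [← LinearMap.ker_eq_bot, LinearMap.ker_eq_bot']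
  rintro ⟨a, b, c, A, hA⟩ h0
  have hX (t : ℝ) (x : E) := congrFun h0 (t • x)
  simp only [moebiusFieldMap, LinearMap.coe_mk, AddHom.coe_mk, moebiusField_smul,
    Pi.zero_apply] at hX
  have ha : a = 0 := by simpa using hX 0 0
  subst ha
  have hlin (x : E) : A x + c • x = 0 := by
    linear_combination (norm := module) (2⁻¹ : ℝ) • (hX 1 x - hX (-1) x)
  have hquad (x : E) : (2 * ⟪x, b⟫) • x - ‖x‖ ^ 2 • b = 0 := by
    linear_combination (norm := module) (2⁻¹ : ℝ) • (hX 1 x + hX (-1) x)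
  have hb : b = 0 := by
    have hbb := hquad b
    rw [real_inner_self_eq_norm_sq] at hbb
    have : ‖b‖ ^ 2 • b = 0 := by linear_combination (norm := module) hbb
    simpa using this
  subst hb
  have hc : c = 0 := by
    obtain ⟨x, hx⟩ := exists_ne (0 : E)
    have hcx := congrArg (⟪·, x⟫) (hlin x)
    simp only [inner_add_left, real_inner_smul_left, inner_zero_left,
      LinearMap.inner_apply_self_eq_zero_of_mem_skewAdjoint hA, zero_add] at hcx
    exact (mul_eq_zero.1 hcx).resolve_right (inner_self_ne_zero.2 hx)
  subst hc
  have hA0 : A = 0 := LinearMap.ext fun x => by simpa using hlin x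
  simp [hA0]

theorem mem_range_moebiusFieldMap {X : E → E} :
    X ∈ LinearMap.range (moebiusFieldMap (E := E)) ↔ ∃ (a b : E) (c : ℝ) (A : E →ₗ[ℝ] E),
      (∀ v w, ⟪A v, w⟫ = -⟪v, A w⟫) ∧ ∀ x, X x = moebiusField a b c A x := by
  constructor
  · rintro ⟨⟨a, b, c, A, hA⟩, rfl⟩
    exact ⟨a, b, c, A, LinearMap.mem_skewAdjoint_iff_inner.1 hA, fun _ => rfl⟩
  · rintro ⟨a, b, c, A, hA, hX⟩
    exact ⟨(a, b, c, ⟨A, LinearMap.mem_skewAdjoint_iff_inner.2 hA⟩), (funext hX).symm⟩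

theorem finrank_range_moebiusFieldMap [Nontrivial E] :
    finrank ℝ (LinearMap.range (moebiusFieldMap (E := E))) = (finrank ℝ E + 2).choose 2 := by
  rw [LinearMap.finrank_range_of_inj moebiusFieldMap_injective, finrank_prod, finrank_prod,
    finrank_prod, finrank_self, LinearMap.finrank_skewAdjoint]
  simp only [Nat.choose_succ_succ', Nat.choose_zero_right, zero_add, Nat.choose_one_right,
    Nat.reduceAdd]
  omega

end MoebiusField

/-- The space of vector fields `x ↦ a + A x + c • x + (2⟪x,b⟫) • x − ‖x‖² • b` (with `A`
skew-adjoint) on flat `ℝⁿ`, `n ≥ 3`, is an `ℝ`-submodule of `E → E` of finite rank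
`(n+1)(n+2)/2`, and each of its members is a conformal Killing field on all of `ℝⁿ`. -/
theorem conformal_killing_flat_space (n : ℕ) (hn : 3 ≤ n) :
    ∃ V : Submodule ℝ (EuclideanSpace ℝ (Fin n) → EuclideanSpace ℝ (Fin n)),
      (∀ X : EuclideanSpace ℝ (Fin n) → EuclideanSpace ℝ (Fin n),
        X ∈ V ↔ ∃ (a b : EuclideanSpace ℝ (Fin n)) (c : ℝ)
            (A : EuclideanSpace ℝ (Fin n) →ₗ[ℝ] EuclideanSpace ℝ (Fin n)),
          (∀ v w : EuclideanSpace ℝ (Fin n), ⟪A v, w⟫ = -⟪v, A w⟫) ∧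
          ∀ x : EuclideanSpace ℝ (Fin n),
            X x = a + A x + c • x + (2 * ⟪x, b⟫) • x - (‖x‖ ^ 2) • b) ∧
      Module.finrank ℝ V = (n + 1) * (n + 2) / 2 ∧
      (∀ X : EuclideanSpace ℝ (Fin n) → EuclideanSpace ℝ (Fin n), X ∈ V →
        ∃ lam : EuclideanSpace ℝ (Fin n) → ℝ,
          ∀ (x v w : EuclideanSpace ℝ (Fin n)),
            ⟪(fderiv ℝ X x) v, w⟫ + ⟪v, (fderiv ℝ X x) w⟫ = lam x * ⟪v, w⟫) := by
  have : NeZero n := ⟨by omega⟩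
  refine ⟨LinearMap.range moebiusFieldMap, fun X => mem_range_moebiusFieldMap, ?_, ?_⟩
  · simp [finrank_range_moebiusFieldMap, Nat.choose_two_right, mul_comm]
  · rintro X ⟨⟨a, b, c, A, hA⟩, rfl⟩
    exact ⟨fun x => 2 * c + 4 * ⟪x, b⟫, inner_fderiv_moebiusField_add hA⟩
end

section
/- Let U ⊆ ℂ be open and let X : ℂ → ℂ be real-differentiable on U (DifferentiableOn ℝ X U). Then the following are equivalent: (1) there exists λ : ℂ → ℝ such that for all z ∈ U and all v w : ℂ one has ⟪(fderiv ℝ X z) v, w⟫ + ⟪v, (fderiv ℝ X z) w⟫ = λ z * ⟪v, w⟫, where ⟪v, w⟫ = re(v * conj w) is the real inner product on ℂ; (2) X is holomorphic on U, i.e. DifferentiableOn ℂ X U. -/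
/-!
Evaluated on the real basis `1, I`, the conformal Killing equation for an `ℝ`-linear map
`L : ℂ → ℂ` says exactly that `L I = I * L 1`, i.e. that `L` is `ℂ`-linear, and then it holds with
`λ = 2 re (L 1)`. Applied to `L = DX(z)`, this is the Cauchy–Riemann equation.
-/

open Complex ComplexConjugate

theorem Complex.map_I_eq_I_smul_map_one_of_conformalKilling {L : ℂ →ₗ[ℝ] ℂ} {c : ℝ}
    (h : ∀ v w : ℂ, (L v * conj w).re + (v * conj (L w)).re = c * (v * conj w).re) :
    L I = I • L 1 := by
  have h₁₁ := h 1 1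
  have hII := h I I
  have h₁I := h 1 I
  simp only [mul_re, conj_re, conj_im, I_re, I_im, one_re, one_im] at h₁₁ hII h₁I
  apply Complex.ext <;> simp only [smul_eq_mul, mul_re, mul_im, I_re, I_im] <;> linarith

theorem Complex.conformalKilling_of_map_I_eq_I_smul_map_one {L : ℂ →ₗ[ℝ] ℂ}
    (h : L I = I • L 1) (v w : ℂ) :
    (L v * conj w).re + (v * conj (L w)).re = 2 * (L 1).re * (v * conj w).re := by
  have hL : ∀ u : ℂ, L u = u * L 1 := fun u => by
    simpa using real_linearMap_map_smul_complex h u 1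
  rw [hL v, hL w]
  simp only [mul_re, mul_im, conj_re, conj_im, map_mul]
  ring

/-- The two-dimensional conformal Killing equation: identifying `ℝ²` with `ℂ` with the real
inner product `⟪v, w⟫ = re (v * conj w)`, a real-differentiable vector field on an open set
`U ⊆ ℂ` is a conformal Killing field iff it is holomorphic on `U`. -/
theorem conformal_killing_iff_holomorphic (U : Set ℂ) (hU : IsOpen U)
    (X : ℂ → ℂ) (hX : DifferentiableOn ℝ X U) :
    (∃ lam : ℂ → ℝ, ∀ z ∈ U, ∀ v w : ℂ,
        ((fderiv ℝ X z) v * (starRingEnd ℂ) w).re + (v * (starRingEnd ℂ) ((fderiv ℝ X z) w)).re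
          = lam z * (v * (starRingEnd ℂ) w).re) ↔
    DifferentiableOn ℂ X U := by
  constructor
  · rintro ⟨lam, h⟩ z hz
    have hXz : DifferentiableAt ℝ X z := (hX z hz).differentiableAt (hU.mem_nhds hz)
    have hCR : fderiv ℝ X z I = I • fderiv ℝ X z 1 :=
      map_I_eq_I_smul_map_one_of_conformalKilling (L := (fderiv ℝ X z : ℂ →ₗ[ℝ] ℂ)) (h z hz)
    exact (differentiableAt_complex_iff_differentiableAt_real.2 ⟨hXz, hCR⟩).differentiableWithinAt
  · intro hXc
    refine ⟨fun z => 2 * (fderiv ℝ X z 1).re, fun z hz => ?_⟩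
    have hCR := (differentiableAt_complex_iff_differentiableAt_real.1
      ((hXc z hz).differentiableAt (hU.mem_nhds hz))).2
    exact conformalKilling_of_map_I_eq_I_smul_map_one (L := (fderiv ℝ X z : ℂ →ₗ[ℝ] ℂ)) hCR
end

section
/- Let m : ℕ and let f ∈ MvPolynomial (Fin 2) ℝ be homogeneous of degree m (MvPolynomial.IsHomogeneous f m) and harmonic, i.e. pderiv 0 (pderiv 0 f) + pderiv 1 (pderiv 1 f) = 0. Then there exist a b : ℝ such that for all x y : ℝ, the evaluation of f at (x, y) equals a * (((x : ℂ) + y * Complex.I)^m).re + b * (((x : ℂ) + y * Complex.I)^m).im. -/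
/-!
Write `f = ∑_{p+q=m} c p q x^p y^q`. The coefficients of the Laplacian are
`(p+2)(p+1) c (p+2) q + (q+2)(q+1) c p (q+2)`, so harmonicity determines every `c p q` with
`p + q = m` from `c m 0` and `c (m-1) 1`. The coefficients `C(m,p) i^q` of `(x + iy)^m` satisfy the
same recurrence, hence so do their real and imaginary parts, whose values at `(m,0)` and `(m-1,1)`
are `(1, 0)` and `(0, m)`: matching these two values fixes `a` and `b`.
-/

open MvPolynomial Finset

noncomputable def xyExponent (p q : ℕ) : Fin 2 →₀ ℕ := Finsupp.single 0 p + Finsupp.single 1 q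

@[simp]
lemma xyExponent_apply_zero (p q : ℕ) : xyExponent p q 0 = p := by
  simp [xyExponent]

@[simp]
lemma xyExponent_apply_one (p q : ℕ) : xyExponent p q 1 = q := by
  simp [xyExponent]

lemma xyExponent_add_single_zero (p q : ℕ) :
    xyExponent p q + Finsupp.single 0 1 = xyExponent (p + 1) q := by
  simp only [xyExponent, Finsupp.single_add]
  abel

lemma xyExponent_add_single_one (p q : ℕ) :
    xyExponent p q + Finsupp.single 1 1 = xyExponent p (q + 1) := by
  simp only [xyExponent, Finsupp.single_add]
  abel

lemma xyExponent_eq_iff {p q : ℕ} {d : Fin 2 →₀ ℕ} :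
    xyExponent p q = d ↔ (p, q) = (d 0, d 1) := by
  constructor
  · rintro rfl
    simp
  · intro h
    ext i
    fin_cases i <;> simp_all

lemma degree_fin_two (d : Fin 2 →₀ ℕ) : d.degree = d 0 + d 1 := by
  rw [Finsupp.degree_eq_sum, Fin.sum_univ_two]

section Homogeneous

variable {R : Type*} [CommSemiring R] {f : MvPolynomial (Fin 2) R} {m : ℕ}

lemma MvPolynomial.IsHomogeneous.eq_sum_antidiagonal (hf : f.IsHomogeneous m) :
    f = ∑ pq ∈ antidiagonal m,
      monomial (xyExponent pq.1 pq.2) (coeff (xyExponent pq.1 pq.2) f) := by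
  ext d
  simp_rw [coeff_sum, coeff_monomial, xyExponent_eq_iff, Prod.mk.eta, sum_ite_eq',
    HasAntidiagonal.mem_antidiagonal]
  split_ifs with hd
  · congr
    exact (xyExponent_eq_iff.mpr rfl).symm
  · exact hf.coeff_eq_zero (by rwa [degree_fin_two])

lemma MvPolynomial.IsHomogeneous.eval_fin_two (hf : f.IsHomogeneous m) (x y : R) :
    eval ![x, y] f =
      ∑ pq ∈ antidiagonal m, coeff (xyExponent pq.1 pq.2) f * (x ^ pq.1 * y ^ pq.2) := by
  conv_lhs => rw [hf.eq_sum_antidiagonal]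
  refine (map_sum _ _ _).trans (sum_congr rfl fun pq _ => ?_)
  rw [eval_monomial, Finsupp.prod_fintype _ _ fun i => pow_zero _, Fin.prod_univ_two]
  simp

end Homogeneous

/-- Read `c p q` as the coefficient of `x^p y^q`: this is the vanishing of the Laplacian. -/
def HarmonicCoeffs {K : Type*} [Semiring K] (c : ℕ → ℕ → K) : Prop :=
  ∀ p q : ℕ, ((p : K) + 2) * (p + 1) * c (p + 2) q + ((q : K) + 2) * (q + 1) * c p (q + 2) = 0

lemma harmonicCoeffs_coeff {R : Type*} [CommSemiring R] {f : MvPolynomial (Fin 2) R}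
    (hharm : pderiv 0 (pderiv 0 f) + pderiv 1 (pderiv 1 f) = 0) :
    HarmonicCoeffs fun p q => coeff (xyExponent p q) f := by
  intro p q
  have h := congrArg (coeff (xyExponent p q)) hharm
  simp only [coeff_add, coeff_pderiv, xyExponent_add_single_zero, xyExponent_add_single_one,
    xyExponent_apply_zero, xyExponent_apply_one, coeff_zero] at h
  push_cast at h
  convert h using 2 <;> ring

theorem HarmonicCoeffs.eq_zero_of_eq_zero {K : Type*} [Field K] [CharZero K] {c : ℕ → ℕ → K}
    {m : ℕ} (hc : HarmonicCoeffs c) (h0 : c m 0 = 0) (h1 : ∀ p, p + 1 = m → c p 1 = 0) :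
    ∀ p q, p + q = m → c p q = 0 := by
  intro p q
  induction q using Nat.twoStepInduction generalizing p with
  | zero => rintro rfl; exact h0
  | one => exact h1 p
  | more q ih _ =>
    intro hpq
    have h := hc p q
    rw [ih (p + 2) (by omega), mul_zero, zero_add] at h
    exact (mul_eq_zero.mp h).resolve_left (by norm_cast)

lemma HarmonicCoeffs.re {w : ℕ → ℕ → ℂ} (hw : HarmonicCoeffs w) :
    HarmonicCoeffs fun p q => (w p q).re := fun p q => by
  simpa using congrArg Complex.re (hw p q)

lemma HarmonicCoeffs.im {w : ℕ → ℕ → ℂ} (hw : HarmonicCoeffs w) :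
    HarmonicCoeffs fun p q => (w p q).im := fun p q => by
  simpa using congrArg Complex.im (hw p q)

theorem Nat.add_two_mul_add_one_mul_choose_add_two (p q : ℕ) :
    (p + 2) * (p + 1) * (p + q + 2).choose (p + 2) = (q + 2) * (q + 1) * (p + q + 2).choose p := by
  have h1 := Nat.choose_succ_right_eq (p + q + 2) p
  have h2 := Nat.choose_succ_right_eq (p + q + 2) (p + 1)
  rw [show p + q + 2 - p = q + 2 by omega] at h1
  rw [show p + q + 2 - (p + 1) = q + 1 by omega] at h2
  calc (p + 2) * (p + 1) * (p + q + 2).choose (p + 2)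
      = (p + q + 2).choose (p + 1 + 1) * (p + 1 + 1) * (p + 1) := by ring
    _ = (p + q + 2).choose (p + 1) * (p + 1) * (q + 1) := by rw [h2]; ring
    _ = (q + 2) * (q + 1) * (p + q + 2).choose p := by rw [h1]; ring

def addMulPowCoeff {R : Type*} [Semiring R] (t : R) (p q : ℕ) : R := (p + q).choose p * t ^ q

lemma add_mul_pow_eq_sum {R : Type*} [CommSemiring R] (t x y : R) (m : ℕ) :
    (x + y * t) ^ m = ∑ pq ∈ antidiagonal m, x ^ pq.1 * y ^ pq.2 * addMulPowCoeff t pq.1 pq.2 := by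
  rw [(Commute.all _ _).add_pow']
  refine sum_congr rfl fun pq hpq => ?_
  rw [addMulPowCoeff, HasAntidiagonal.mem_antidiagonal.mp hpq, nsmul_eq_mul, mul_pow]
  ring

lemma harmonicCoeffs_addMulPowCoeff {R : Type*} [CommRing R] {t : R} (ht : t ^ 2 = -1) :
    HarmonicCoeffs (addMulPowCoeff t) := by
  intro p q
  have key := congrArg (Nat.cast : ℕ → R) (Nat.add_two_mul_add_one_mul_choose_add_two p q)
  push_cast at key
  simp only [addMulPowCoeff, pow_add, ht, show p + 2 + q = p + q + 2 by ring]
  linear_combination t ^ q * key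

/-- A harmonic polynomial in two variables, homogeneous of degree `m`, is a real linear
combination of the real and imaginary parts of `(x + iy)^m`. -/
theorem harmonic_homogeneous_two_vars_form (m : ℕ) (f : MvPolynomial (Fin 2) ℝ)
    (hf : f.IsHomogeneous m)
    (hharm : pderiv 0 (pderiv 0 f) + pderiv 1 (pderiv 1 f) = 0) :
    ∃ a b : ℝ, ∀ x y : ℝ,
      MvPolynomial.eval ![x, y] f =
        a * (((x : ℂ) + y * Complex.I) ^ m).re + b * (((x : ℂ) + y * Complex.I) ^ m).im := by
  set w := addMulPowCoeff Complex.I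
  set a := coeff (xyExponent m 0) f
  set b := coeff (xyExponent (m - 1) 1) f / m
  have hc : HarmonicCoeffs fun p q =>
      coeff (xyExponent p q) f - (a * (w p q).re + b * (w p q).im) := by
    have hw := harmonicCoeffs_addMulPowCoeff Complex.I_sq
    intro p q
    linear_combination harmonicCoeffs_coeff hharm p q - a * hw.re p q - b * hw.im p q
  have hcoeff : ∀ p q, p + q = m →
      coeff (xyExponent p q) f = a * (w p q).re + b * (w p q).im := by
    intro p q hpq
    refine sub_eq_zero.mp (hc.eq_zero_of_eq_zero ?_ ?_ p q hpq)
    · simp [w, addMulPowCoeff, a]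
    · rintro n rfl
      simp [w, addMulPowCoeff, b, Nat.cast_add_one_ne_zero]
  refine ⟨a, b, fun x y => ?_⟩
  rw [hf.eval_fin_two, add_mul_pow_eq_sum, Complex.re_sum, Complex.im_sum, mul_sum, mul_sum,
    ← sum_add_distrib]
  refine sum_congr rfl fun pq hpq => ?_
  rw [hcoeff _ _ (HasAntidiagonal.mem_antidiagonal.mp hpq), ← Complex.ofReal_pow,
    ← Complex.ofReal_pow, ← Complex.ofReal_mul, Complex.re_ofReal_mul, Complex.im_ofReal_mul]
  ring
end

section
/- Let m ≥ 1 and let f ∈ MvPolynomial (Fin 2) ℝ be homogeneous of degree m (MvPolynomial.IsHomogeneous f m) and harmonic, i.e. pderiv 0 (pderiv 0 f) + pderiv 1 (pderiv 1 f) = 0. Set θ = 2π/m. Then f is invariant under the rotation by angle θ: for all x y : ℝ, evaluating f at (cos θ * x − sin θ * y, sin θ * x + cos θ * y) gives the same value as evaluating f at (x, y). -/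
/-!
In the null coordinates `z = x + i y`, `w = x - i y` the Laplacian becomes `4 ∂_z ∂_w`.
A harmonic polynomial therefore has no mixed monomials in `z, w`, so a harmonic polynomial
homogeneous of degree `m` is `a z ^ m + b w ^ m`. Rotation by `θ` acts as
`(z, w) ↦ (e^{iθ} z, e^{-iθ} w)`, and for `θ = 2π/m` both factors are `m`-th roots of unity.
-/

open MvPolynomial Real

namespace MvPolynomial

variable {σ R : Type*}

theorem pderiv_pderiv_comm [CommSemiring R] (i j : σ) (f : MvPolynomial σ R) :
    pderiv i (pderiv j f) = pderiv j (pderiv i f) := by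
  classical
  ext s
  simp only [coeff_pderiv, Finsupp.add_apply, add_right_comm s (Finsupp.single i 1)]
  by_cases h : i = j
  · subst h; ring
  · simp only [Finsupp.single_apply, if_neg h, if_neg (Ne.symm h), add_zero]
    ring

theorem pderiv_aeval [CommSemiring R] [Fintype σ] {τ S : Type*} [CommSemiring S] [Algebra R S]
    (p : σ → MvPolynomial τ S) (j : τ) (f : MvPolynomial σ R) :
    pderiv j (aeval p f) = ∑ i, aeval p (pderiv i f) * pderiv j (p i) := by
  classical
  induction f using MvPolynomial.induction_on with
  | C a => simp
  | add f g hf hg => simp only [map_add, hf, hg, add_mul, Finset.sum_add_distrib]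
  | mul_X f k hf =>
    simp only [map_mul, aeval_X, Derivation.leibniz, pderiv_X, hf, smul_eq_mul, map_add,
      add_mul, Finset.sum_add_distrib, Pi.single_apply, mul_ite, mul_one, mul_zero, Finset.mul_sum]
    simp [apply_ite, ite_mul, mul_assoc]

theorem coeff_eq_zero_of_pderiv_pderiv_eq_zero [CommRing R] [IsDomain R] [CharZero R]
    {i j : σ} (hij : i ≠ j) {g : MvPolynomial σ R} (hg : pderiv i (pderiv j g) = 0)
    {t : σ →₀ ℕ} (hi : t i ≠ 0) (hj : t j ≠ 0) : coeff t g = 0 := by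
  classical
  have hle : Finsupp.single i 1 + Finsupp.single j 1 ≤ t := fun k => by
    simp only [Finsupp.add_apply, Finsupp.single_apply]
    split_ifs <;> subst_vars <;> first | omega | contradiction
  have := congr_arg (coeff (t - (Finsupp.single i 1 + Finsupp.single j 1))) hg
  simpa only [coeff_pderiv, coeff_zero, mul_eq_zero, Nat.cast_add_one_ne_zero, or_false,
    add_assoc, tsub_add_cancel_of_le hle] using this

theorem eval_mul_eq_of_prod_pow_eq_one [CommSemiring R] [Fintype σ] (g : MvPolynomial σ R)
    (c v : σ → R) (h : ∀ t ∈ g.support, ∏ i, c i ^ t i = 1) :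
    eval (c * v) g = eval v g := by
  rw [eval_eq', eval_eq']
  refine Finset.sum_congr rfl fun t ht => ?_
  simp only [Pi.mul_apply, mul_pow, Finset.prod_mul_distrib, h t ht, one_mul]

theorem IsHomogeneous.eval_mul_eq_of_pderiv_pderiv_eq_zero [CommRing R] [IsDomain R]
    [CharZero R] {m : ℕ} {g : MvPolynomial (Fin 2) R} (hg : g.IsHomogeneous m)
    (hmix : pderiv 0 (pderiv 1 g) = 0) {ω ω' : R} (hω : ω ^ m = 1) (hω' : ω' ^ m = 1)
    (z w : R) : eval ![ω * z, ω' * w] g = eval ![z, w] g := by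
  have hvec : ![ω * z, ω' * w] = ![ω, ω'] * ![z, w] := by
    ext i; fin_cases i <;> rfl
  rw [hvec]
  refine eval_mul_eq_of_prod_pow_eq_one g _ _ fun t ht => ?_
  have hdeg : t 0 + t 1 = m := by
    by_contra hne
    exact mem_support_iff.mp ht
      (hg.coeff_eq_zero (by rwa [Finsupp.degree_eq_sum, Fin.sum_univ_two]))
  have hpure : t 0 = 0 ∨ t 1 = 0 := by
    by_contra! h
    exact mem_support_iff.mp ht
      (coeff_eq_zero_of_pderiv_pderiv_eq_zero (by decide) hmix h.1 h.2)
  rcases hpure with h | h <;> simp_all [Fin.prod_univ_two]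

end MvPolynomial

/-- `x = (z + w) / 2` and `y = i (w - z) / 2`, inverting `z = x + i y`, `w = x - i y`. -/
noncomputable def nullSubst : Fin 2 → MvPolynomial (Fin 2) ℂ :=
  ![C (1 / 2) * (X 0 + X 1), C (Complex.I / 2) * (X 1 - X 0)]

theorem isHomogeneous_nullSubst (i : Fin 2) : (nullSubst i).IsHomogeneous 1 := by
  fin_cases i
  · exact ((isHomogeneous_X ℂ 0).add (isHomogeneous_X ℂ 1)).C_mul _
  · exact ((isHomogeneous_X ℂ 1).sub (isHomogeneous_X ℂ 0)).C_mul _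

theorem pderiv_nullSubst :
    pderiv 0 (nullSubst 0) = C (1 / 2) ∧ pderiv 1 (nullSubst 0) = C (1 / 2) ∧
      pderiv 0 (nullSubst 1) = -C (Complex.I / 2) ∧ pderiv 1 (nullSubst 1) = C (Complex.I / 2) := by
  simp [nullSubst, pderiv_X]

theorem eval_aeval_nullSubst (f : MvPolynomial (Fin 2) ℝ) (x y : ℝ) :
    eval ![(x : ℂ) + y * Complex.I, x - y * Complex.I] (aeval nullSubst f) = eval ![x, y] f := by
  have hsubst : (fun i => eval ![(x : ℂ) + y * Complex.I, x - y * Complex.I] (nullSubst i)) =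
      algebraMap ℝ ℂ ∘ ![x, y] := by
    ext i; fin_cases i <;>
      simp only [nullSubst, Fin.zero_eta, Fin.mk_one, Matrix.cons_val_zero, Matrix.cons_val_one,
        Matrix.cons_val_fin_one, map_mul, map_add, map_sub, eval_C, eval_X, Function.comp_apply,
        Complex.coe_algebraMap]
    · ring
    · linear_combination (-(y : ℂ)) * Complex.I_mul_I
  have hC : (eval ![(x : ℂ) + y * Complex.I, x - y * Complex.I]).comp (algebraMap ℝ _) =
      algebraMap ℝ ℂ :=
    RingHom.ext fun r => eval_C _
  rw [map_aeval, hC, hsubst, ← aeval_eq_eval₂Hom, aeval_algebraMap_apply]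
  rfl

theorem pderiv_pderiv_aeval_nullSubst (f : MvPolynomial (Fin 2) ℝ) :
    pderiv 0 (pderiv 1 (aeval nullSubst f)) =
      C (1 / 4) * aeval nullSubst (pderiv 0 (pderiv 0 f) + pderiv 1 (pderiv 1 f)) := by
  obtain ⟨h00, h10, h01, h11⟩ := pderiv_nullSubst
  simp only [pderiv_aeval, Fin.sum_univ_two, h00, h10, h01, h11, map_add, pderiv_mul, pderiv_C,
    mul_zero, add_zero]
  rw [pderiv_pderiv_comm 1 0 f]
  have hhalf : (C (1 / 2) : MvPolynomial (Fin 2) ℂ) ^ 2 = C (1 / 4) := by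
    rw [← map_pow]; norm_num
  have hI : (C (Complex.I / 2) : MvPolynomial (Fin 2) ℂ) ^ 2 = -C (1 / 4) := by
    rw [← map_pow, ← map_neg, div_pow, Complex.I_sq]; norm_num
  linear_combination aeval nullSubst (pderiv 0 (pderiv 0 f)) * hhalf -
    aeval nullSubst (pderiv 1 (pderiv 1 f)) * hI

theorem rotate_add_mul_I (θ x y : ℝ) :
    ((cos θ * x - sin θ * y : ℝ) : ℂ) + (sin θ * x + cos θ * y : ℝ) * Complex.I =
      Complex.exp (θ * Complex.I) * (x + y * Complex.I) := by
  rw [Complex.exp_mul_I]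
  push_cast
  linear_combination (-(Complex.sin θ * y)) * Complex.I_mul_I

theorem rotate_sub_mul_I (θ x y : ℝ) :
    ((cos θ * x - sin θ * y : ℝ) : ℂ) - (sin θ * x + cos θ * y : ℝ) * Complex.I =
      Complex.exp (-θ * Complex.I) * (x - y * Complex.I) := by
  rw [Complex.exp_mul_I, Complex.cos_neg, Complex.sin_neg]
  push_cast
  linear_combination (-(Complex.sin θ * y)) * Complex.I_mul_I

theorem exp_two_pi_div_mul_I_pow (m : ℕ) :
    Complex.exp (↑(2 * π / m) * Complex.I) ^ m = 1 := by
  rcases eq_or_ne m 0 with rfl | hm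
  · exact pow_zero _
  rw [← Complex.exp_nat_mul, ← Complex.exp_two_pi_mul_I]
  push_cast
  field_simp

theorem exp_neg_two_pi_div_mul_I_pow (m : ℕ) :
    Complex.exp (-↑(2 * π / m) * Complex.I) ^ m = 1 := by
  rw [neg_mul, Complex.exp_neg, inv_pow, exp_two_pi_div_mul_I_pow, inv_one]

theorem harmonic_homogeneous_rotation_invariant_general (m : ℕ)
    (f : MvPolynomial (Fin 2) ℝ)
    (hf : f.IsHomogeneous m)
    (hharm : pderiv 0 (pderiv 0 f) + pderiv 1 (pderiv 1 f) = 0) :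
    ∀ x y : ℝ,
      MvPolynomial.eval
          ![Real.cos (2 * π / m) * x - Real.sin (2 * π / m) * y,
            Real.sin (2 * π / m) * x + Real.cos (2 * π / m) * y] f
        = MvPolynomial.eval ![x, y] f := by
  intro x y
  have hhom : (aeval nullSubst f).IsHomogeneous m := by
    simpa using hf.aeval nullSubst isHomogeneous_nullSubst
  have hmix : pderiv 0 (pderiv 1 (aeval nullSubst f)) = 0 := by
    rw [pderiv_pderiv_aeval_nullSubst, hharm, map_zero, mul_zero]
  apply Complex.ofReal_injective
  rw [← eval_aeval_nullSubst, ← eval_aeval_nullSubst, rotate_add_mul_I, rotate_sub_mul_I]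
  exact hhom.eval_mul_eq_of_pderiv_pderiv_eq_zero hmix (exp_two_pi_div_mul_I_pow m)
    (exp_neg_two_pi_div_mul_I_pow m) _ _

/-- A harmonic polynomial in two variables, homogeneous of degree `m ≥ 1`, is invariant
under the Euclidean rotation by the angle `2π/m`. -/
theorem harmonic_homogeneous_rotation_invariant (m : ℕ) (hm : 1 ≤ m)
    (f : MvPolynomial (Fin 2) ℝ)
    (hf : f.IsHomogeneous m)
    (hharm : pderiv 0 (pderiv 0 f) + pderiv 1 (pderiv 1 f) = 0) :
    ∀ x y : ℝ,
      MvPolynomial.eval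
          ![Real.cos (2 * π / m) * x - Real.sin (2 * π / m) * y,
            Real.sin (2 * π / m) * x + Real.cos (2 * π / m) * y] f
        = MvPolynomial.eval ![x, y] f :=
  harmonic_homogeneous_rotation_invariant_general m f hf hharm
end

section
/- Let n ≥ 3 and m ≥ 2, and let f ∈ MvPolynomial (Fin n) ℝ be homogeneous of degree m (MvPolynomial.IsHomogeneous f m). Let F : EuclideanSpace ℝ (Fin n) → ℝ denote the evaluation of f. Suppose that for every pair of vectors u v ∈ EuclideanSpace ℝ (Fin n) with ‖u‖ = 1, ‖v‖ = 1 and ⟪u, v⟫ = 0, the function g : ℝ → ℝ → ℝ, g s t = F (s • u + t • v), has vanishing two-dimensional Laplacian: for all s t : ℝ, deriv (fun s' => deriv (fun s'' => g s'' t) s') s + deriv (fun t' => deriv (fun t'' => g s t'') t') t = 0. Then f = 0. -/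
/-!
Write a point as `x = s • u` with `‖u‖ = 1` and complete `u` to an orthonormal basis `b`. On
the plane spanned by `u` and `b k` (for the `n - 1` vectors `b k ≠ u`) the hypothesis says
`∂²_{b k} f x = -∂²_u f x`; since the Laplacian is the trace of the Hessian in any orthonormal
basis, `Δf x = (2 - n) ∂²_u f x`. Euler's identity gives `s² ∂²_u f x = m (m - 1) f x`, so
`|x|² Δf = c f` with `c = (2 - n) m (m - 1) < 0`. Applying `Δ` and using
`Δ (|x|² g) = (2n + 4k) g + |x|² Δg` for `g` homogeneous of degree `k` yields the same kind of
identity for `Δf`, with an even more negative constant; by induction on the degree `Δf = 0`,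
hence `c f = 0`.
-/

open MvPolynomial
open scoped RealInnerProductSpace

theorem OrthonormalBasis.sum_apply_mul_apply {σ ι : Type*} [Fintype σ] [Fintype ι]
    [DecidableEq σ] (b : OrthonormalBasis ι ℝ (EuclideanSpace ℝ σ)) (i j : σ) :
    ∑ k, b k i * b k j = if i = j then 1 else 0 := by
  simpa [EuclideanSpace.inner_single_left, EuclideanSpace.inner_single_right, mul_comm, eq_comm]
    using b.sum_inner_mul_inner (EuclideanSpace.single i 1) (EuclideanSpace.single j 1)

theorem exists_orthonormalBasis_apply_eq {E ι : Type*} [NormedAddCommGroup E]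
    [InnerProductSpace ℝ E] [FiniteDimensional ℝ E] [Fintype ι]
    (hcard : Module.finrank ℝ E = Fintype.card ι) {u : E} (hu : ‖u‖ = 1) (i : ι) :
    ∃ b : OrthonormalBasis ι ℝ E, b i = u := by
  have ho : Orthonormal ℝ (({i} : Set ι).domRestrict fun _ => u) :=
    ⟨fun _ => hu, fun j k hjk => (hjk (Subsingleton.elim j k)).elim⟩
  obtain ⟨b, hb⟩ := ho.exists_orthonormalBasis_extension_of_card_eq hcard
  exact ⟨b, hb i rfl⟩

theorem exists_norm_eq_one_and_eq_norm_smul {E : Type*} [NormedAddCommGroup E] [NormedSpace ℝ E]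
    [Nontrivial E] (x : E) : ∃ u : E, ‖u‖ = 1 ∧ x = ‖x‖ • u := by
  rcases eq_or_ne x 0 with rfl | hx
  · obtain ⟨u, hu⟩ := exists_norm_eq E zero_le_one
    exact ⟨u, hu, by simp⟩
  · exact ⟨‖x‖⁻¹ • x, norm_smul_inv_norm hx,
      (smul_inv_smul₀ (norm_ne_zero_iff.mpr hx) x).symm⟩

namespace MvPolynomial

section Algebra

variable {R σ : Type*} [CommSemiring R] [Fintype σ]

noncomputable def dirDeriv (a : σ → R) : Derivation R (MvPolynomial σ R) (MvPolynomial σ R) :=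
  ∑ i, a i • pderiv i

noncomputable def laplacian (p : MvPolynomial σ R) : MvPolynomial σ R :=
  ∑ i, pderiv i (pderiv i p)

noncomputable def sumSqX : MvPolynomial σ R :=
  ∑ i, X i ^ 2

theorem dirDeriv_apply (a : σ → R) (p : MvPolynomial σ R) :
    dirDeriv a p = ∑ i, a i • pderiv i p := by
  rw [dirDeriv, ← Derivation.coeFnAddMonoidHom_apply, map_sum, Finset.sum_apply]
  rfl

theorem dirDeriv_X (a : σ → R) (i : σ) : dirDeriv a (X i) = C (a i) := by
  classical
  simp [dirDeriv_apply, pderiv_X, Pi.single_apply, smul_eq_C_mul]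

theorem dirDeriv_smul (r : R) (a : σ → R) : dirDeriv (r • a) = r • dirDeriv a := by
  simp only [dirDeriv, Pi.smul_apply, smul_eq_mul, mul_smul, Finset.smul_sum]

theorem eval_dirDeriv_self {k : ℕ} {p : MvPolynomial σ R} (hp : p.IsHomogeneous k)
    (x : σ → R) : eval x (dirDeriv x p) = k * eval x p := by
  simpa [dirDeriv_apply] using congrArg (eval x) hp.sum_X_mul_pderiv

-- `k - 1` truncates only at `k = 0`, where the factor `k` vanishes anyway.
theorem eval_dirDeriv_dirDeriv_self {k : ℕ} {p : MvPolynomial σ R} (hp : p.IsHomogeneous k)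
    (x : σ → R) : eval x (dirDeriv x (dirDeriv x p)) = (k * (k - 1) : ℕ) * eval x p := by
  have hDp : (dirDeriv x p).IsHomogeneous (k - 1) := by
    rw [dirDeriv_apply]
    exact IsHomogeneous.sum _ _ _ fun i _ => by
      simpa [smul_eq_C_mul] using hp.pderiv.C_mul (x i)
  rw [eval_dirDeriv_self hDp, eval_dirDeriv_self hp, Nat.cast_mul]
  ring

theorem laplacian_smul (c : R) (p : MvPolynomial σ R) :
    laplacian (c • p) = c • laplacian p := by
  simp only [laplacian, Derivation.map_smul, Finset.smul_sum]

protected theorem IsHomogeneous.laplacian {k : ℕ} {p : MvPolynomial σ R}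
    (hp : p.IsHomogeneous k) : (laplacian p).IsHomogeneous (k - 2) :=
  IsHomogeneous.sum _ _ _ fun _ _ => hp.pderiv.pderiv

theorem IsHomogeneous.laplacian_eq_zero {k : ℕ} {p : MvPolynomial σ R}
    (hp : p.IsHomogeneous k) (hk : k < 2) : laplacian p = 0 := by
  refine Finset.sum_eq_zero fun i _ => ?_
  have h0 : (pderiv i p).IsHomogeneous 0 := by simpa [show k - 1 = 0 by omega] using hp.pderiv
  rw [← totalDegree_zero_iff_isHomogeneous, totalDegree_eq_zero_iff_eq_C] at h0
  rw [h0, pderiv_C]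

theorem pderiv_sumSqX (i : σ) : pderiv i (sumSqX : MvPolynomial σ R) = 2 * X i := by
  classical
  simp [sumSqX, pderiv_X, Pi.single_apply, mul_comm]

theorem laplacian_sumSqX_mul {k : ℕ} {p : MvPolynomial σ R} (hp : p.IsHomogeneous k) :
    laplacian (sumSqX * p) =
      (2 * Fintype.card σ + 4 * k : ℕ) • p + sumSqX * laplacian p := by
  have hi (i : σ) : pderiv i (pderiv i (sumSqX * p)) =
      2 * p + 4 * (X i * pderiv i p) + sumSqX * pderiv i (pderiv i p) := by
    have h2 : pderiv i (2 : MvPolynomial σ R) = 0 := (pderiv i).map_natCast 2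
    simp only [Derivation.leibniz, pderiv_sumSqX, smul_eq_mul, pderiv_X_self, map_add, h2]
    ring
  simp only [laplacian, hi, Finset.sum_add_distrib, ← Finset.mul_sum, hp.sum_X_mul_pderiv,
    Finset.sum_const, Finset.card_univ, nsmul_eq_mul, add_smul, mul_smul, Nat.cast_ofNat]

end Algebra

theorem IsHomogeneous.eq_zero_of_sumSqX_mul_laplacian_eq_smul {K σ : Type*} [Field K]
    [LinearOrder K] [IsStrictOrderedRing K] [Fintype σ] {k : ℕ} {p : MvPolynomial σ K}
    (hp : p.IsHomogeneous k) {c : K} (hc : c < 0) (h : sumSqX * laplacian p = c • p) :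
    p = 0 := by
  induction k using Nat.strong_induction_on generalizing p c with
  | _ k ih =>
  have hΔ : laplacian p = 0 := by
    rcases lt_or_ge k 2 with hk | hk
    · exact hp.laplacian_eq_zero hk
    set N : ℕ := 2 * Fintype.card σ + 4 * (k - 2)
    have hΔΔ : sumSqX * laplacian (laplacian p) = (c - N) • laplacian p := by
      have := congrArg laplacian h
      rw [laplacian_sumSqX_mul hp.laplacian, laplacian_smul] at this
      rw [sub_smul, ← this, Nat.cast_smul_eq_nsmul]
      abel
    exact ih (k - 2) (by omega) hp.laplacian (by linarith [N.cast_nonneg (α := K)]) hΔΔ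
  rw [hΔ, mul_zero, eq_comm, smul_eq_zero] at h
  exact h.resolve_left hc.ne

section Calculus

variable {𝕜 σ : Type*} [NontriviallyNormedField 𝕜] [Fintype σ]

theorem hasDerivAt_eval_line (p : MvPolynomial σ 𝕜) (c d : σ → 𝕜) (t : 𝕜) :
    HasDerivAt (fun t => eval (c + t • d) p) (eval (c + t • d) (dirDeriv d p)) t := by
  induction p using MvPolynomial.induction_on with
  | C a => simpa [← algebraMap_eq] using hasDerivAt_const t a
  | add p q hp hq =>
    simp only [map_add]
    exact hp.fun_add hq
  | mul_X p i hp =>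
    have hXi : HasDerivAt (fun t => c i + t * d i) (d i) t := by
      simpa using (hasDerivAt_mul_const (d i)).const_add (c i)
    simp only [Derivation.leibniz, dirDeriv_X, smul_eq_mul, map_add, map_mul, eval_X, eval_C,
      Pi.add_apply, Pi.smul_apply]
    exact (hp.fun_mul hXi).congr_deriv (by ring)

theorem deriv_deriv_eval_line (p : MvPolynomial σ 𝕜) (c d : σ → 𝕜) (t : 𝕜) :
    deriv (fun t => deriv (fun t => eval (c + t • d) p) t) t =
      eval (c + t • d) (dirDeriv d (dirDeriv d p)) := by
  have hderiv : deriv (fun t : 𝕜 => eval (c + t • d) p) =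
      fun t => eval (c + t • d) (dirDeriv d p) := by
    ext s
    exact (hasDerivAt_eval_line p c d s).deriv
  rw [hderiv, (hasDerivAt_eval_line _ c d t).deriv]

end Calculus

section Euclidean

variable {σ : Type*} [Fintype σ]

-- Evaluated at `s • u + t • v`, `∂²_u p + ∂²_v p` is the Laplacian of
-- `(s, t) ↦ p (s • u + t • v)`, the restriction of `p` to `span {u, v}` in orthonormal
-- coordinates.
def IsHarmonicOnPlanes (p : MvPolynomial σ ℝ) : Prop :=
  ∀ u v : EuclideanSpace ℝ σ, ‖u‖ = 1 → ‖v‖ = 1 → ⟪u, v⟫ = 0 → ∀ s t : ℝ,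
    eval (s • ⇑u + t • ⇑v) (dirDeriv u (dirDeriv u p) + dirDeriv v (dirDeriv v p)) = 0

theorem sum_dirDeriv_dirDeriv_orthonormalBasis {ι : Type*} [Fintype ι]
    (b : OrthonormalBasis ι ℝ (EuclideanSpace ℝ σ)) (p : MvPolynomial σ ℝ) :
    ∑ k, dirDeriv (b k) (dirDeriv (b k) p) = laplacian p := by
  classical
  have hk (k : ι) : dirDeriv (b k) (dirDeriv (b k) p) =
      ∑ i, ∑ j, (b k i * b k j) • pderiv j (pderiv i p) := by
    simp only [dirDeriv_apply, map_sum, Derivation.map_smul, Finset.smul_sum, smul_smul]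
  simp only [hk]
  rw [laplacian, Finset.sum_comm]
  refine Finset.sum_congr rfl fun i _ => ?_
  rw [Finset.sum_comm]
  simp only [← Finset.sum_smul, b.sum_apply_mul_apply, ite_smul, one_smul, zero_smul,
    Finset.sum_ite_eq, Finset.mem_univ, if_true]

theorem eval_sumSqX (x : EuclideanSpace ℝ σ) :
    eval ⇑x (sumSqX : MvPolynomial σ ℝ) = ‖x‖ ^ 2 := by
  simp [sumSqX, EuclideanSpace.real_norm_sq_eq]

variable [Nonempty σ] {p : MvPolynomial σ ℝ}

theorem IsHarmonicOnPlanes.eval_laplacian_smul (hp : p.IsHarmonicOnPlanes)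
    {u : EuclideanSpace ℝ σ} (hu : ‖u‖ = 1) (s : ℝ) :
    eval (s • ⇑u) (laplacian p) =
      (2 - Fintype.card σ) * eval (s • ⇑u) (dirDeriv u (dirDeriv u p)) := by
  let i₀ := Classical.arbitrary σ
  obtain ⟨b, hb⟩ := exists_orthonormalBasis_apply_eq (by simp) hu i₀
  have hsum :
      ∑ k, eval (s • ⇑u) (dirDeriv (b k) (dirDeriv (b k) p) + dirDeriv u (dirDeriv u p)) =
      2 * eval (s • ⇑u) (dirDeriv u (dirDeriv u p)) := by
    rw [Finset.sum_eq_single i₀ _ (by simp), hb, map_add, two_mul]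
    intro k _ hk
    have huk : ⟪u, b k⟫ = 0 := hb ▸ b.orthonormal.2 (Ne.symm hk)
    simpa [add_comm] using hp u (b k) hu (b.norm_eq_one k) huk s 0
  simp only [map_add, Finset.sum_add_distrib, Finset.sum_const, Finset.card_univ,
    nsmul_eq_mul] at hsum
  rw [← sum_dirDeriv_dirDeriv_orthonormalBasis b, map_sum]
  linear_combination hsum

theorem IsHarmonicOnPlanes.sumSqX_mul_laplacian {m : ℕ} (hp : p.IsHarmonicOnPlanes)
    (hm : p.IsHomogeneous m) :
    sumSqX * laplacian p = ((2 - Fintype.card σ) * (m * (m - 1) : ℕ) : ℝ) • p := by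
  refine MvPolynomial.funext fun x => ?_
  let y : EuclideanSpace ℝ σ := WithLp.toLp 2 x
  obtain ⟨u, hu, hyu⟩ := exists_norm_eq_one_and_eq_norm_smul y
  have hx : x = ‖y‖ • ⇑u := congrArg WithLp.ofLp hyu
  have hΔ := hp.eval_laplacian_smul hu ‖y‖
  have hscale : eval x (dirDeriv x (dirDeriv x p)) =
      ‖y‖ ^ 2 * eval x (dirDeriv u (dirDeriv u p)) := by
    rw [hx, dirDeriv_smul]
    simp only [Derivation.smul_apply, Derivation.map_smul, smul_eval]
    ring
  rw [← hx] at hΔ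
  rw [eval_mul, smul_eval, eval_sumSqX y]
  linear_combination ‖y‖ ^ 2 * hΔ +
    (2 - Fintype.card σ) * (hscale.symm.trans (eval_dirDeriv_dirDeriv_self hm x))

end Euclidean

end MvPolynomial

/-- Vanishing lemma: a real polynomial in `n ≥ 3` variables, homogeneous of degree `m ≥ 2`,
whose restriction to every `2`-dimensional linear subspace of Euclidean `ℝⁿ` (expressed via
an orthonormal pair `u, v`) is harmonic, vanishes identically. -/
theorem homogeneous_all_planes_harmonic_eq_zero (n : ℕ) (hn : 3 ≤ n) (m : ℕ) (hm : 2 ≤ m)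
    (f : MvPolynomial (Fin n) ℝ) (hf : f.IsHomogeneous m)
    (F : EuclideanSpace ℝ (Fin n) → ℝ)
    (hF : ∀ p : EuclideanSpace ℝ (Fin n), F p = MvPolynomial.eval (fun i => p i) f)
    (hharm : ∀ u v : EuclideanSpace ℝ (Fin n),
      ‖u‖ = 1 → ‖v‖ = 1 → ⟪u, v⟫ = 0 →
      ∀ s t : ℝ,
        deriv (fun s' => deriv (fun s'' => F (s'' • u + t • v)) s') s +
        deriv (fun t' => deriv (fun t'' => F (s • u + t'' • v)) t') t = 0) :
    f = 0 := by
  have hplanes : f.IsHarmonicOnPlanes := by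
    intro u v hu hv huv s t
    have h₁ := deriv_deriv_eval_line f (t • ⇑v) u s
    have h₂ := deriv_deriv_eval_line f (s • ⇑u) v t
    simp only [add_comm (t • ⇑v)] at h₁
    rw [map_add, ← h₁, ← h₂]
    simpa only [hF, WithLp.ofLp_add, WithLp.ofLp_smul] using hharm u v hu hv huv s t
  have : Nonempty (Fin n) := ⟨⟨0, by omega⟩⟩
  refine hf.eq_zero_of_sumSqX_mul_laplacian_eq_smul ?_ (hplanes.sumSqX_mul_laplacian hf)
  have hn' : (2 : ℝ) - n < 0 := by linarith [show (3 : ℝ) ≤ n by exact_mod_cast hn]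
  rw [Fintype.card_fin]
  exact mul_neg_of_neg_of_pos hn' (Nat.cast_pos.mpr (Nat.mul_pos (by omega) (by omega)))
end

section
/- Let n ≥ 3, let E = EuclideanSpace ℝ (Fin n), let θ ∈ ℝ with 0 < θ < π, and let f : E → ℝ be any function. Suppose that f x = f y whenever ‖x‖ = ‖y‖ and ⟪x, y⟫ = Real.cos θ * (‖x‖ * ‖y‖). Then f x = f y whenever ‖x‖ = ‖y‖, i.e. f is constant on every sphere centered at the origin. -/
open scoped RealInnerProductSpace

open Filter Topology

/-!
Given `x`, `y` on the sphere of radius `r` with `⟪x, y⟫ = r² cos χ`, and a unit vector `z`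
orthogonal to both (it exists because the dimension is at least 3), the point
`w = a (x + y) + s z` lies on the same sphere and makes angle `β` with both `x` and `y` for
suitable `a`, `s`, as soon as `2 cos² β ≤ 1 + cos χ`. So invariance at angle `β` implies
invariance at `χ`. Since `2 cos² (χ / 2) = 1 + cos χ`, invariance at `χ / 2` gives invariance
at `χ`; and since `cos² θ < 1`, invariance at `θ` gives invariance at all small angles. Halving
any angle often enough makes it small.
-/

section

variable {E : Type*} [NormedAddCommGroup E] [InnerProductSpace ℝ E]

theorem exists_norm_eq_one_inner_eq_zero (hE : 2 < Module.finrank ℝ E) (x y : E) :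
    ∃ z : E, ‖z‖ = 1 ∧ ⟪x, z⟫ = 0 ∧ ⟪y, z⟫ = 0 := by
  classical
  have : FiniteDimensional ℝ E := Module.finite_of_finrank_pos (by omega)
  have hspan : Module.finrank ℝ (Submodule.span ℝ ({x, y} : Set E)) ≤ 2 := by
    have h := finrank_span_finset_le_card (R := ℝ) ({x, y} : Finset E)
    rw [Finset.coe_pair] at h
    exact h.trans Finset.card_le_two
  have hK : Submodule.span ℝ ({x, y} : Set E) ≠ ⊤ := by
    intro hK
    rw [hK, finrank_top] at hspan
    omega
  obtain ⟨v, hvK, hv⟩ := Submodule.exists_mem_ne_zero_of_ne_bot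
    (mt Submodule.orthogonal_eq_bot_iff.mp hK)
  refine ⟨‖v‖⁻¹ • v, norm_smul_inv_norm hv, ?_, ?_⟩ <;>
    rw [real_inner_smul_right, Submodule.inner_right_of_mem_orthogonal
      (Submodule.subset_span (by simp)) hvK, mul_zero]

theorem exists_norm_eq_inner_eq_of_two_mul_sq_le (hE : 2 < Module.finrank ℝ E) {x y : E}
    {r c b : ℝ} (hx : ‖x‖ = r) (hy : ‖y‖ = r) (hxy : ⟪x, y⟫ = c * r ^ 2)
    (hb : 2 * b ^ 2 ≤ 1 + c) :
    ∃ w : E, ‖w‖ = r ∧ ⟪x, w⟫ = b * r ^ 2 ∧ ⟪w, y⟫ = b * r ^ 2 := by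
  obtain ⟨z, hz, hxz, hyz⟩ := exists_norm_eq_one_inner_eq_zero hE x y
  set a := b / (1 + c)
  have hc : 0 ≤ 1 + c := by nlinarith
  have hab : a * (1 + c) = b := by
    -- antipodal case `c = -1`: then `b = 0`, and `a = b / 0 = 0`
    rcases hc.eq_or_lt with hc | hc
    · have hb0 : b = 0 := by nlinarith
      simp [a, hb0]
    · exact div_mul_cancel₀ b hc.ne'
  have h2ab : 2 * a * b ≤ 1 := by
    calc 2 * a * b = 2 * b ^ 2 / (1 + c) := by ring
      _ ≤ 1 := div_le_one_of_le₀ hb hc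
  set s := r * √(1 - 2 * a * b)
  have hs : s ^ 2 = r ^ 2 * (1 - 2 * a * b) := by
    rw [mul_pow, Real.sq_sqrt (by linarith)]
  have hxx : ⟪x, x⟫ = r ^ 2 := by rw [real_inner_self_eq_norm_sq, hx]
  have hyy : ⟪y, y⟫ = r ^ 2 := by rw [real_inner_self_eq_norm_sq, hy]
  have hzz : ⟪z, z⟫ = 1 := by rw [real_inner_self_eq_norm_sq, hz, one_pow]
  have hyx : ⟪y, x⟫ = c * r ^ 2 := by rw [real_inner_comm, hxy]
  have hzx : ⟪z, x⟫ = 0 := by rw [real_inner_comm, hxz]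
  have hzy : ⟪z, y⟫ = 0 := by rw [real_inner_comm, hyz]
  set w := a • (x + y) + s • z
  have hw : ⟪x, w⟫ = b * r ^ 2 ∧ ⟪w, y⟫ = b * r ^ 2 ∧ ⟪w, w⟫ = r ^ 2 := by
    refine ⟨?_, ?_, ?_⟩ <;> simp only [w, inner_add_left, inner_add_right, real_inner_smul_left,
      real_inner_smul_right, hxx, hyy, hzz, hxy, hyx, hxz, hyz, hzx, hzy]
    · linear_combination r ^ 2 * hab
    · linear_combination r ^ 2 * hab
    · linear_combination (2 * a * r ^ 2) * hab + hs
  refine ⟨w, ?_, hw.1, hw.2.1⟩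
  rw [← sq_eq_sq₀ (norm_nonneg w) (hx ▸ norm_nonneg x), ← real_inner_self_eq_norm_sq, hw.2.2]

def InvariantAtAngle {α : Type*} (f : E → α) (χ : ℝ) : Prop :=
  ∀ x y : E, ‖x‖ = ‖y‖ → ⟪x, y⟫ = Real.cos χ * (‖x‖ * ‖y‖) → f x = f y

namespace InvariantAtAngle

variable {α : Type*} {f : E → α}

theorem of_two_mul_cos_sq_le (hE : 2 < Module.finrank ℝ E) {β χ : ℝ}
    (hf : InvariantAtAngle f β) (h : 2 * Real.cos β ^ 2 ≤ 1 + Real.cos χ) :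
    InvariantAtAngle f χ := by
  intro x y hxy hin
  obtain ⟨w, hw, hxw, hwy⟩ := exists_norm_eq_inner_eq_of_two_mul_sq_le hE rfl hxy.symm
    (by rw [hin, ← hxy, sq]) h
  calc f x = f w := hf x w hw.symm (by rw [hxw, hw, sq])
    _ = f y := hf w y (hw.trans hxy) (by rw [hwy, hw, ← hxy, sq])

theorem of_half (hE : 2 < Module.finrank ℝ E) {χ : ℝ} (hf : InvariantAtAngle f (χ / 2)) :
    InvariantAtAngle f χ :=
  hf.of_two_mul_cos_sq_le hE <| by
    rw [Real.cos_sq, mul_div_cancel₀ χ two_ne_zero]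
    linarith

theorem of_div_two_pow (hE : 2 < Module.finrank ℝ E) {χ : ℝ} :
    ∀ k : ℕ, InvariantAtAngle f (χ / 2 ^ k) → InvariantAtAngle f χ
  | 0, hf => by simpa using hf
  | k + 1, hf => of_div_two_pow hE k <| of_half hE <| by rwa [div_div, ← pow_succ]

theorem eventually_nhds_zero (hE : 2 < Module.finrank ℝ E) {θ : ℝ}
    (hf : InvariantAtAngle f θ) (hθ : Real.sin θ ≠ 0) :
    ∀ᶠ χ in 𝓝 0, InvariantAtAngle f χ := by
  have hcos : 2 * Real.cos θ ^ 2 - 1 < Real.cos 0 := by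
    have : 0 < Real.sin θ ^ 2 := by positivity
    rw [Real.cos_zero]
    linarith [Real.sin_sq_add_cos_sq θ]
  filter_upwards [Real.continuous_cos.continuousAt.eventually_const_lt hcos] with χ hχ
  exact hf.of_two_mul_cos_sq_le hE (by linarith)

theorem eq_of_norm_eq (hE : 2 < Module.finrank ℝ E)
    (hf : ∀ᶠ χ in 𝓝 0, InvariantAtAngle f χ) {x y : E} (hxy : ‖x‖ = ‖y‖) : f x = f y := by
  set ψ := InnerProductGeometry.angle x y
  have hlim : Tendsto (fun k : ℕ => ψ / 2 ^ k) atTop (𝓝 0) := by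
    have h := tendsto_pow_atTop_nhds_zero_of_lt_one (r := (2⁻¹ : ℝ)) (by norm_num) (by norm_num)
    simpa [div_eq_mul_inv] using h.const_mul ψ
  obtain ⟨k, hk⟩ := (hlim.eventually hf).exists
  exact of_div_two_pow hE k hk x y hxy (InnerProductGeometry.cos_angle_mul_norm_mul_norm x y).symm

end InvariantAtAngle

end

/-- Fixed-angle connectivity of spheres: in Euclidean `ℝⁿ` with `n ≥ 3`, a function taking
equal values on any two points of equal norm making a fixed angle `θ ∈ (0, π)` is constant
on every sphere centered at the origin. -/
theorem fixed_angle_implies_radial (n : ℕ) (hn : 3 ≤ n) (θ : ℝ)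
    (hθ0 : 0 < θ) (hθπ : θ < Real.pi)
    (f : EuclideanSpace ℝ (Fin n) → ℝ)
    (h : ∀ x y : EuclideanSpace ℝ (Fin n),
      ‖x‖ = ‖y‖ → ⟪x, y⟫ = Real.cos θ * (‖x‖ * ‖y‖) → f x = f y) :
    ∀ x y : EuclideanSpace ℝ (Fin n), ‖x‖ = ‖y‖ → f x = f y := by
  have hE : 2 < Module.finrank ℝ (EuclideanSpace ℝ (Fin n)) := by
    rw [finrank_euclideanSpace_fin]; omega
  exact fun x y => InvariantAtAngle.eq_of_norm_eq hE <|
    InvariantAtAngle.eventually_nhds_zero hE h (Real.sin_pos_of_pos_of_lt_pi hθ0 hθπ).ne'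
end

section
/- Let V be a finite-dimensional ℂ-vector space, let B : V →ₗ[ℂ] V →ₗ[ℂ] ℂ be a symmetric bilinear form (B x y = B y x) which is nondegenerate (if B x y = 0 for all y then x = 0). Let E be a 2-dimensional subspace of V (finrank ℂ E = 2) that is totally isotropic: B e e' = 0 for all e, e' ∈ E. Then the subspace W = {f : E →ₗ[ℂ] V | ∀ e ∈ E, B (f e) e = 0} of the space of linear maps E →ₗ[ℂ] V satisfies finrank ℂ W = 2 * finrank ℂ V − 3, i.e. W has codimension 3 in Hom(E, V). -/
/-!
The condition on `f` says that the bilinear form `(a, c) ↦ B (f a) c` on `E` is alternating.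
Nondegeneracy of `B` makes `f ↦ B (f ·) ·` surjective onto all bilinear forms on `E`, and a form
`β` on `E` with basis `e₀, e₁` is alternating iff the three coefficients `β e₀ e₀`, `β e₁ e₁`,
`β e₀ e₁ + β e₁ e₀` of `x ↦ β x x` vanish. These coefficients can be prescribed freely, so the
space is the kernel of a surjection from the `2 · dim V`-dimensional `Hom(E, V)` onto `ℂ³`.
-/

open Module

theorem LinearMap.SeparatingLeft.surjective_dualMap_subtype_comp {K V : Type*} [Field K]
    [AddCommGroup V] [Module K V] [FiniteDimensional K V] {B : V →ₗ[K] V →ₗ[K] K}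
    (hB : B.SeparatingLeft) (E : Submodule K V) :
    Function.Surjective (E.subtype.dualMap ∘ₗ B) := by
  have hB_inj : Function.Injective B :=
    LinearMap.ker_eq_bot.mp (LinearMap.separatingLeft_iff_ker_eq_bot.mp hB)
  have hB_surj : Function.Surjective B :=
    (LinearMap.injective_iff_surjective_of_finrank_eq_finrank
      Subspace.dual_finrank_eq.symm).mp hB_inj
  exact (LinearMap.dualMap_surjective_of_injective E.injective_subtype).comp hB_surj

section QuadCoeffs

variable {R M : Type*} [CommRing R] [AddCommGroup M] [Module R M] (b : Basis (Fin 2) R M)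

noncomputable def quadCoeffs : (M →ₗ[R] M →ₗ[R] R) →ₗ[R] (Fin 3 → R) :=
  LinearMap.pi ![LinearMap.applyₗ (b 0) ∘ₗ LinearMap.applyₗ (b 0),
    LinearMap.applyₗ (b 1) ∘ₗ LinearMap.applyₗ (b 1),
    LinearMap.applyₗ (b 1) ∘ₗ LinearMap.applyₗ (b 0) +
      LinearMap.applyₗ (b 0) ∘ₗ LinearMap.applyₗ (b 1)]

theorem quadCoeffs_apply (β : M →ₗ[R] M →ₗ[R] R) :
    quadCoeffs b β = ![β (b 0) (b 0), β (b 1) (b 1), β (b 0) (b 1) + β (b 1) (b 0)] := by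
  ext i; fin_cases i <;> rfl

theorem isAlt_iff_quadCoeffs_eq_zero (β : M →ₗ[R] M →ₗ[R] R) :
    β.IsAlt ↔ quadCoeffs b β = 0 := by
  rw [quadCoeffs_apply]
  constructor
  · intro hβ
    have h01 : β (b 0) (b 1) + β (b 1) (b 0) = 0 := by
      have h := hβ (b 0 + b 1)
      simp only [map_add, LinearMap.add_apply, hβ (b 0), hβ (b 1)] at h
      linear_combination h
    ext i
    fin_cases i
    exacts [hβ (b 0), hβ (b 1), h01]
  · intro h x
    have h00 : β (b 0) (b 0) = 0 := congrFun h 0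
    have h11 : β (b 1) (b 1) = 0 := congrFun h 1
    have h01 : β (b 0) (b 1) + β (b 1) (b 0) = 0 := congrFun h 2
    rw [← b.sum_repr x, Fin.sum_univ_two]
    simp only [map_add, map_smul, LinearMap.add_apply, LinearMap.smul_apply, smul_eq_mul]
    linear_combination b.repr x 0 * b.repr x 0 * h00 + b.repr x 1 * b.repr x 1 * h11 +
      b.repr x 0 * b.repr x 1 * h01

theorem quadCoeffs_surjective : Function.Surjective (quadCoeffs b) := by
  intro c
  refine ⟨Matrix.toLinearMap₂ b b !![c 0, c 2; 0, c 1], ?_⟩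
  ext i; fin_cases i <;> simp [quadCoeffs_apply]

end QuadCoeffs

theorem isotropic_grassmannian_tangent_dim_general (V : Type*) [AddCommGroup V] [Module ℂ V]
    [FiniteDimensional ℂ V]
    (B : V →ₗ[ℂ] V →ₗ[ℂ] ℂ)
    (hnondeg : ∀ x : V, (∀ y : V, B x y = 0) → x = 0)
    (E : Submodule ℂ V) (hE : Module.finrank ℂ E = 2) :
    ∃ W : Submodule ℂ (E →ₗ[ℂ] V),
      (∀ f : E →ₗ[ℂ] V, f ∈ W ↔ ∀ e : E, B (f e) (e : V) = 0) ∧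
      Module.finrank ℂ W = 2 * Module.finrank ℂ V - 3 := by
  let b := finBasisOfFinrankEq ℂ E hE
  let Φ : (E →ₗ[ℂ] V) →ₗ[ℂ] (Fin 3 → ℂ) :=
    quadCoeffs b ∘ₗ LinearMap.llcomp ℂ E V (Dual ℂ E) (E.subtype.dualMap ∘ₗ B)
  have hΦ : Function.Surjective Φ := (quadCoeffs_surjective b).comp <|
    Function.Surjective.surjective_linearMapComp_left <|
      LinearMap.SeparatingLeft.surjective_dualMap_subtype_comp hnondeg E
  refine ⟨LinearMap.ker Φ, fun f => ?_, ?_⟩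
  · rw [LinearMap.mem_ker, LinearMap.comp_apply, ← isAlt_iff_quadCoeffs_eq_zero]
    rfl
  · have h := Φ.finrank_range_add_finrank_ker
    rw [LinearMap.range_eq_top.mpr hΦ, finrank_top, finrank_linearMap, hE, finrank_fin_fun] at h
    omega

/-- Linear-algebra step for the contact structure on the isotropic Grassmannian: if `B` is a
nondegenerate symmetric bilinear form on a finite-dimensional `ℂ`-vector space `V` and
`E ⊆ V` is a `2`-dimensional totally isotropic subspace, then the space of linear maps
`f : E → V` with `B (f e) e = 0` for all `e ∈ E` has dimension `2·dim V − 3`. -/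
theorem isotropic_grassmannian_tangent_dim (V : Type*) [AddCommGroup V] [Module ℂ V]
    [FiniteDimensional ℂ V]
    (B : V →ₗ[ℂ] V →ₗ[ℂ] ℂ)
    (hsymm : ∀ x y : V, B x y = B y x)
    (hnondeg : ∀ x : V, (∀ y : V, B x y = 0) → x = 0)
    (E : Submodule ℂ V) (hE : Module.finrank ℂ E = 2)
    (hiso : ∀ e ∈ E, ∀ e' ∈ E, B e e' = 0) :
    ∃ W : Submodule ℂ (E →ₗ[ℂ] V),
      (∀ f : E →ₗ[ℂ] V, f ∈ W ↔ ∀ e : E, B (f e) (e : V) = 0) ∧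
      Module.finrank ℂ W = 2 * Module.finrank ℂ V - 3 :=
  isotropic_grassmannian_tangent_dim_general V B hnondeg E hE
end
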